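/- arXiv:1509.05857 — 10 statements merged into one kernel-verified Lean document; each statement's English description precedes it below -/
import Mathlib

section
/- If G is a C4-free graph on n vertices with minimum degree δ, then the clique number of G satisfies ω(G) ≥ δ²/(2n + δ). -/
/-!
If `x ≠ y` are non-adjacent vertices of a `C₄`-free graph, their common neighbourhood is a clique,
so the closed neighbourhoods of two non-adjacent vertices share at most `ω` vertices.

Repeatedly picking a vertex and deleting its closed neighbourhood therefore costs every remaining
vertex at most `ω` neighbours, which yields an independent set `I` of size `m` with
`(m - 1) ω < δ ≤ m ω`. The `m` closed neighbourhoods of `I` have at least `δ + 1` vertices each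
and pairwise overlap in at most `ω`, so by Bonferroni `m (δ + 1) ≤ n + (m choose 2) ω`, whence
`m δ ≤ 2n` and `δ² ≤ ω m δ ≤ 2nω`.
-/

open SimpleGraph
open scoped Classical

/-- `G` contains no induced 4-cycle. -/
def IsC4Free {V : Type*} (G : SimpleGraph V) : Prop :=
  ∀ a b c d : V, a ≠ c → b ≠ d → G.Adj a b → G.Adj b c → G.Adj c d → G.Adj d a →
    ¬G.Adj a c → ¬G.Adj b d → False

/-- A set of pairwise non-adjacent vertices. -/
def IsIndepSet {V : Type*} (G : SimpleGraph V) (s : Set V) : Prop :=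
  ∀ ⦃x⦄, x ∈ s → ∀ ⦃y⦄, y ∈ s → x ≠ y → ¬G.Adj x y

/-- The independence number: the clique number of the complement. -/
noncomputable def indepNum {V : Type*} (G : SimpleGraph V) : ℕ := Gᶜ.cliqueNum

open Finset

theorem Finset.sum_card_le_card_biUnion_add_choose_two_mul {ι α : Type*} [DecidableEq ι]
    [DecidableEq α] (s : Finset ι) (A : ι → Finset α) (c : ℕ)
    (hA : ∀ i ∈ s, ∀ j ∈ s, i ≠ j → #(A i ∩ A j) ≤ c) :
    ∑ i ∈ s, #(A i) ≤ #(s.biUnion A) + (#s).choose 2 * c := by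
  induction s using Finset.induction_on with
  | empty => simp
  | @insert x s hx ih =>
    have hoverlap : #(A x ∩ s.biUnion A) ≤ #s * c := by
      rw [inter_biUnion]
      calc #(s.biUnion fun y ↦ A x ∩ A y) ≤ ∑ y ∈ s, #(A x ∩ A y) := card_biUnion_le
        _ ≤ ∑ _y ∈ s, c := sum_le_sum fun y hy ↦
            hA x (mem_insert_self x s) y (mem_insert_of_mem hy) (by rintro rfl; exact hx hy)
        _ = #s * c := by rw [sum_const, smul_eq_mul]
    have hunion := card_union_add_card_inter (A x) (s.biUnion A)
    have ih' := ih fun i hi j hj ↦ hA i (mem_insert_of_mem hi) j (mem_insert_of_mem hj)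
    have hchoose : (#s + 1).choose 2 = #s + (#s).choose 2 := by
      rw [Nat.choose_succ_succ', Nat.choose_one_right]
    rw [sum_insert hx, biUnion_insert, card_insert_of_notMem hx, hchoose, add_mul]
    omega

namespace SimpleGraph

variable {V : Type*} (G : SimpleGraph V) [Fintype V] [DecidableEq V] [DecidableRel G.Adj]

def closedNeighborFinset (x : V) : Finset V := insert x (G.neighborFinset x)

lemma mem_closedNeighborFinset {x y : V} : y ∈ G.closedNeighborFinset x ↔ y = x ∨ G.Adj x y := by
  simp [closedNeighborFinset]

lemma card_closedNeighborFinset (x : V) : #(G.closedNeighborFinset x) = G.degree x + 1 := by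
  rw [closedNeighborFinset, card_insert_of_notMem (by simp), card_neighborFinset_eq_degree]

end SimpleGraph

namespace IsC4Free

variable {V : Type*} {G : SimpleGraph V} [Fintype V] [DecidableEq V] [DecidableRel G.Adj]

lemma isClique_closedNeighborFinset_inter (hG : IsC4Free G) {x y : V} (hxy : x ≠ y)
    (hadj : ¬G.Adj x y) :
    G.IsClique (↑(G.closedNeighborFinset x ∩ G.closedNeighborFinset y) : Set V) := by
  have common : ∀ z ∈ G.closedNeighborFinset x ∩ G.closedNeighborFinset y,
      G.Adj x z ∧ G.Adj y z := by
    intro z hz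
    simp only [mem_inter, mem_closedNeighborFinset] at hz
    obtain ⟨rfl | hxz, rfl | hyz⟩ := hz
    · exact absurd rfl hxy
    · exact absurd hyz.symm hadj
    · exact absurd hxz hadj
    · exact ⟨hxz, hyz⟩
  intro z hz w hw hzw
  by_contra hzw'
  obtain ⟨hxz, hyz⟩ := common z hz
  obtain ⟨hxw, hyw⟩ := common w hw
  exact hG z x w y hzw hxy hxz.symm hxw hyw.symm hyz hzw' hadj

lemma card_closedNeighborFinset_inter_le (hG : IsC4Free G) {x y : V} (hxy : x ≠ y)
    (hadj : ¬G.Adj x y) :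
    #(G.closedNeighborFinset x ∩ G.closedNeighborFinset y) ≤ G.cliqueNum :=
  IsClique.card_le_cliqueNum (tc := hG.isClique_closedNeighborFinset_inter hxy hadj)

lemma exists_isNIndepSet_subset (hG : IsC4Free G) {t d : ℕ} {S : Finset V} (hS : S.Nonempty)
    (hd : G.cliqueNum * t < d) (hdeg : ∀ x ∈ S, d ≤ #(S ∩ G.neighborFinset x)) :
    ∃ I ⊆ S, G.IsNIndepSet (t + 1) I := by
  induction t generalizing d S with
  | zero =>
    obtain ⟨v, hv⟩ := hS
    exact ⟨{v}, by simpa, by simp [isNIndepSet_iff]⟩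
  | succ t ih =>
    obtain ⟨a, ha, b, hb, hab, hnadj⟩ : ∃ a ∈ S, ∃ b ∈ S, a ≠ b ∧ ¬G.Adj a b := by
      by_contra! hclique
      have hSk : #S ≤ G.cliqueNum := IsClique.card_le_cliqueNum (tc := hclique)
      obtain ⟨v, hv⟩ := hS
      have hvdeg : #(S ∩ G.neighborFinset v) < #S :=
        card_lt_card ⟨inter_subset_left, fun h ↦ by simpa using (h hv)⟩
      have := hdeg v hv
      have : G.cliqueNum ≤ G.cliqueNum * (t + 1) := Nat.le_mul_of_pos_right _ t.succ_pos
      omega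
    set S' := S \ G.closedNeighborFinset a
    have hS' : ∀ {x}, x ∈ S' ↔ x ∈ S ∧ x ≠ a ∧ ¬G.Adj a x := by
      simp [S', mem_closedNeighborFinset]
    have hdeg' : ∀ x ∈ S', d - G.cliqueNum ≤ #(S' ∩ G.neighborFinset x) := by
      intro x hx
      obtain ⟨hxS, hxa, hax⟩ := hS'.1 hx
      have hsplit : S ∩ G.neighborFinset x ⊆
          (S' ∩ G.neighborFinset x) ∪ (G.closedNeighborFinset x ∩ G.closedNeighborFinset a) := by
        intro z hz
        simp only [mem_inter, mem_union, mem_neighborFinset, hS', mem_closedNeighborFinset]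
          at hz ⊢
        tauto
      have hcard : #(S ∩ G.neighborFinset x) ≤ #(S' ∩ G.neighborFinset x) +
          #(G.closedNeighborFinset x ∩ G.closedNeighborFinset a) :=
        (card_le_card hsplit).trans (card_union_le _ _)
      have := hG.card_closedNeighborFinset_inter_le hxa fun h ↦ hax h.symm
      have := hdeg x hxS
      omega
    obtain ⟨I, hIS', hI⟩ := ih ⟨b, hS'.2 ⟨hb, hab.symm, hnadj⟩⟩
      (by rw [Nat.mul_succ] at hd; omega) hdeg'
    refine ⟨insert a I, insert_subset ha fun x hx ↦ (hS'.1 (hIS' hx)).1, ?_⟩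
    rw [← isNClique_compl] at hI ⊢
    exact hI.insert fun w hw ↦
      have ⟨_, hwa, haw⟩ := hS'.1 (hIS' hw)
      (compl_adj G a w).2 ⟨hwa.symm, haw⟩

lemma card_mul_succ_minDegree_le (hG : IsC4Free G) {I : Finset V} (hI : G.IsIndepSet I) :
    #I * (G.minDegree + 1) ≤ Fintype.card V + (#I).choose 2 * G.cliqueNum :=
  calc #I * (G.minDegree + 1) = ∑ _x ∈ I, (G.minDegree + 1) := by rw [sum_const, smul_eq_mul]
    _ ≤ ∑ x ∈ I, #(G.closedNeighborFinset x) := sum_le_sum fun x _ ↦ by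
        rw [card_closedNeighborFinset]; exact Nat.add_le_add_right (G.minDegree_le_degree x) 1
    _ ≤ #(I.biUnion G.closedNeighborFinset) + (#I).choose 2 * G.cliqueNum :=
        sum_card_le_card_biUnion_add_choose_two_mul _ _ _ fun x hx y hy hxy ↦
          hG.card_closedNeighborFinset_inter_le hxy (hI hx hy hxy)
    _ ≤ Fintype.card V + (#I).choose 2 * G.cliqueNum := by gcongr; exact card_le_univ _

theorem minDegree_sq_le (hG : IsC4Free G) :
    G.minDegree ^ 2 ≤ 2 * Fintype.card V * G.cliqueNum := by
  set δ := G.minDegree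
  set k := G.cliqueNum
  rcases Nat.eq_zero_or_pos δ with hδ | hδ
  · simp [hδ]
  obtain ⟨v⟩ : Nonempty V := by
    by_contra h
    rw [not_nonempty_iff] at h
    simp [δ] at hδ
  have hk : 0 < k := IsClique.card_le_cliqueNum (t := {v}) (tc := by simp)
  -- `t + 1 = ⌈δ / k⌉`
  set t := (δ - 1) / k
  have hkt : k * t ≤ δ - 1 := Nat.mul_div_le (δ - 1) k
  have hδkt : δ ≤ k * (t + 1) := by
    have : δ - 1 < k * (t + 1) := Nat.lt_mul_div_succ (δ - 1) hk
    omega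
  obtain ⟨I, -, hI⟩ := hG.exists_isNIndepSet_subset (S := univ) ⟨v, mem_univ v⟩
    (by change k * t < δ; omega)
    fun x _ ↦ by rw [univ_inter, card_neighborFinset_eq_degree]; exact G.minDegree_le_degree x
  have hcount := hG.card_mul_succ_minDegree_le hI.isIndepSet
  rw [hI.card_eq] at hcount
  have hchoose : 2 * (t + 1).choose 2 = (t + 1) * t := by
    rw [Nat.choose_two_right, Nat.two_mul_div_two_of_even (Nat.even_mul_pred_self _),
      Nat.add_sub_cancel]
  have hpairs : (t + 1) * t * k ≤ (t + 1) * (δ - 1) := by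
    rw [mul_assoc, mul_comm t]; exact Nat.mul_le_mul_left _ hkt
  have hmδ : (t + 1) * δ ≤ 2 * Fintype.card V := by
    have : (t + 1) * (δ - 1) + (t + 1) = (t + 1) * δ := by
      rw [← Nat.mul_succ, Nat.succ_eq_add_one, Nat.sub_add_cancel hδ]
    nlinarith
  calc δ ^ 2 = δ * δ := sq δ
    _ ≤ k * (t + 1) * δ := Nat.mul_le_mul_right δ hδkt
    _ = k * ((t + 1) * δ) := mul_assoc _ _ _
    _ ≤ k * (2 * Fintype.card V) := Nat.mul_le_mul_left k hmδ
    _ = 2 * Fintype.card V * k := mul_comm _ _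

end IsC4Free

theorem stmt1 {V : Type*} [Fintype V] (G : SimpleGraph V) [DecidableRel G.Adj]
    (hC4 : IsC4Free G) :
    (G.cliqueNum : ℝ) ≥
      (G.minDegree : ℝ) ^ 2 / (2 * (Fintype.card V : ℝ) + (G.minDegree : ℝ)) := by
  have key : (G.minDegree : ℝ) ^ 2 ≤ 2 * Fintype.card V * G.cliqueNum := by
    exact_mod_cast hC4.minDegree_sq_le
  refine div_le_of_le_mul₀ (by positivity) (by positivity) ?_
  have : (0 : ℝ) ≤ G.cliqueNum * G.minDegree := by positivity
  linarith
end

section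
/- If G is a C4-free graph on n vertices with minimum degree δ(G) ≤ 11n/15, then ω(G) ≥ δ(G) − n/3. -/
open SimpleGraph
open scoped Classical

/-!
Two non-adjacent vertices `x, y` of a C4-free graph have a clique as common neighbourhood, so
`deg x + deg y ≤ |N x ∪ N y| + ω`. If `G` has three pairwise non-adjacent vertices,
inclusion–exclusion over their neighbourhoods gives `3δ ≤ n + 3ω`. Otherwise the non-neighbours
of a vertex of minimum degree form a clique, so `n - 1 - δ ≤ ω`; together with
`2δ + 2 ≤ n + ω` for any non-adjacent pair this again yields `3δ ≤ n + 3ω` (and if `G` is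
complete, `ω = n`).
-/

open Finset

theorem Finset.card_add_card_add_card_le {α : Type*} [DecidableEq α] (s t u : Finset α) :
    #s + #t + #u ≤ #(s ∪ t ∪ u) + #(s ∩ t) + #(s ∩ u) + #(t ∩ u) := by
  have hst := card_union_add_card_inter s t
  have hstu := card_union_add_card_inter (s ∪ t) u
  have hsplit : #((s ∪ t) ∩ u) ≤ #(s ∩ u) + #(t ∩ u) := by
    rw [union_inter_distrib_right]
    exact card_union_le _ _
  omega

namespace SimpleGraph

variable {V : Type*} {G : SimpleGraph V}

theorem IsC4Free.isClique_commonNeighbors (hG : IsC4Free G) {x y : V} (hxy : Gᶜ.Adj x y) :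
    G.IsClique (G.commonNeighbors x y) := by
  rintro u ⟨hxu, hyu⟩ w ⟨hxw, hyw⟩ huw
  by_contra huw'
  exact hG x u y w hxy.ne huw hxu (G.adj_symm hyu) hyw (G.adj_symm hxw) hxy.2 huw'

variable [Fintype V] [DecidableRel G.Adj]

theorem minDegree_le_card : G.minDegree ≤ Fintype.card V := by
  cases isEmpty_or_nonempty V
  · simp [minDegree_of_subsingleton]
  · exact G.minDegree_lt_card.le

theorem card_le_cliqueNum_of_compl_eq_bot (h : Gᶜ = ⊥) : Fintype.card V ≤ G.cliqueNum := by
  refine IsClique.card_le_cliqueNum (t := Finset.univ) (tc := fun x _ y _ hne => ?_)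
  by_contra hxy
  simpa [h] using (G.compl_adj x y).2 ⟨hne, hxy⟩

theorem card_le_degree_add_cliqueNum (hG : Gᶜ.CliqueFree 3) (v : V) :
    Fintype.card V ≤ G.degree v + 1 + G.cliqueNum := by
  have hclique : G.IsClique (Gᶜ.neighborFinset v : Set V) := by
    rw [coe_neighborFinset, ← isIndepSet_compl]
    exact isIndepSet_neighborSet_of_triangleFree Gᶜ hG v
  have hcard := hclique.card_le_cliqueNum
  rw [card_neighborFinset_eq_degree, degree_compl] at hcard
  omega

theorem IsC4Free.card_inter_neighborFinset_le_cliqueNum (hG : IsC4Free G) {x y : V}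
    (hxy : Gᶜ.Adj x y) : #(G.neighborFinset x ∩ G.neighborFinset y) ≤ G.cliqueNum :=
  IsClique.card_le_cliqueNum (tc := by
    rw [Finset.coe_inter, coe_neighborFinset, coe_neighborFinset, ← commonNeighbors_eq]
    exact hG.isClique_commonNeighbors hxy)

theorem IsC4Free.degree_add_degree_add_two_le (hG : IsC4Free G) {x y : V} (hxy : Gᶜ.Adj x y) :
    G.degree x + G.degree y + 2 ≤ Fintype.card V + G.cliqueNum := by
  have hdisj : Disjoint (G.neighborFinset x ∪ G.neighborFinset y) {x, y} := by
    simp [hxy.2, mt G.adj_symm hxy.2]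
  have hunion := card_le_univ (G.neighborFinset x ∪ G.neighborFinset y ∪ {x, y})
  rw [card_union_of_disjoint hdisj, card_pair hxy.ne] at hunion
  have hincl := card_union_add_card_inter (G.neighborFinset x) (G.neighborFinset y)
  have hinter := hG.card_inter_neighborFinset_le_cliqueNum hxy
  rw [card_neighborFinset_eq_degree, card_neighborFinset_eq_degree] at hincl
  omega

theorem IsC4Free.three_mul_minDegree_le_of_compl_adj (hG : IsC4Free G) {a b c : V}
    (hab : Gᶜ.Adj a b) (hac : Gᶜ.Adj a c) (hbc : Gᶜ.Adj b c) :
    3 * G.minDegree ≤ Fintype.card V + 3 * G.cliqueNum := by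
  have hincl := card_add_card_add_card_le
    (G.neighborFinset a) (G.neighborFinset b) (G.neighborFinset c)
  simp only [card_neighborFinset_eq_degree] at hincl
  have hunion := card_le_univ (G.neighborFinset a ∪ G.neighborFinset b ∪ G.neighborFinset c)
  have hab' := hG.card_inter_neighborFinset_le_cliqueNum hab
  have hac' := hG.card_inter_neighborFinset_le_cliqueNum hac
  have hbc' := hG.card_inter_neighborFinset_le_cliqueNum hbc
  have := G.minDegree_le_degree a
  have := G.minDegree_le_degree b
  have := G.minDegree_le_degree c
  omega

theorem IsC4Free.three_mul_minDegree_le (hG : IsC4Free G) :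
    3 * G.minDegree ≤ Fintype.card V + 3 * G.cliqueNum := by
  by_cases hα : Gᶜ.CliqueFree 3
  · by_cases hcomplete : Gᶜ = ⊥
    · have := card_le_cliqueNum_of_compl_eq_bot hcomplete
      have := G.minDegree_le_card
      omega
    · obtain ⟨x, y, hxy⟩ := ne_bot_iff_exists_adj.1 hcomplete
      have : Nonempty V := ⟨x⟩
      obtain ⟨v, hv⟩ := G.exists_minimal_degree_vertex
      have hpair := hG.degree_add_degree_add_two_le hxy
      have hnonnbrs := card_le_degree_add_cliqueNum hα v
      have := G.minDegree_le_degree x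
      have := G.minDegree_le_degree y
      -- `hnonnbrs` plus twice `hpair`, with `G.degree v = G.minDegree`
      omega
  · obtain ⟨s, hs⟩ := not_forall_not.1 hα
    obtain ⟨a, b, c, hab, hac, hbc, -⟩ := is3Clique_iff.1 hs
    exact hG.three_mul_minDegree_le_of_compl_adj hab hac hbc

end SimpleGraph

theorem stmt2_general {V : Type*} [Fintype V] (G : SimpleGraph V) [DecidableRel G.Adj]
    (hC4 : IsC4Free G) :
    (G.cliqueNum : ℝ) ≥ (G.minDegree : ℝ) - (Fintype.card V : ℝ) / 3 := by
  have h : (3 * G.minDegree : ℝ) ≤ Fintype.card V + 3 * G.cliqueNum := by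
    exact_mod_cast hC4.three_mul_minDegree_le
  linarith

theorem stmt2 {V : Type*} [Fintype V] (G : SimpleGraph V) [DecidableRel G.Adj]
    (hC4 : IsC4Free G) (hδ : (G.minDegree : ℝ) ≤ 11 * (Fintype.card V : ℝ) / 15) :
    (G.cliqueNum : ℝ) ≥ (G.minDegree : ℝ) - (Fintype.card V : ℝ) / 3 :=
  stmt2_general G hC4
end

section
/- For every ε > 0, if G is a C4-free graph on n vertices with minimum degree at least δ, and G contains an independent set of size t ≥ (n² − δ²)/(ε δ²) + 1, then G contains a clique of size at least (1 − ε)δ²/n. -/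
/-!
Two non-adjacent vertices of a C4-free graph have a clique as common neighbourhood, so it suffices
to find two vertices of the independent set `S` with a large common neighbourhood. Writing
`d v = |N(v) ∩ S|`, double counting gives `∑_{a ≠ b ∈ S} |N(a) ∩ N(b)| = ∑_v d v (d v - 1)`, and
Cauchy–Schwarz together with `∑_v d v ≥ |S| δ ≥ n` bounds this below by `|S| δ (|S| δ - n) / n`.
Averaging over the `|S| (|S| - 1)` pairs yields a common neighbourhood of size at least
`δ (|S| δ - n) / (n (|S| - 1))`. Since `(n - δ) δ ≤ n² - δ²`, the hypothesis on `|S|` gives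
`n - δ ≤ ε δ (|S| - 1)`, which makes this at least `(1 - ε) δ² / n`.
-/

open SimpleGraph
open scoped Classical

open Finset

theorem one_lt_and_one_sub_mul_le_of_div_add_one_le {ε δ n t : ℝ} (hε : 0 < ε) (hδ : 0 < δ)
    (hδn : δ < n) (h : (n ^ 2 - δ ^ 2) / (ε * δ ^ 2) + 1 ≤ t) :
    1 < t ∧ (1 - ε) * δ * (t - 1) ≤ t * δ - n := by
  have hsq : n ^ 2 - δ ^ 2 ≤ (t - 1) * (ε * δ ^ 2) :=
    (div_le_iff₀ (by positivity)).mp (by linarith)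
  have hgap : n - δ ≤ ε * δ * (t - 1) := by
    refine le_of_mul_le_mul_right ?_ hδ
    nlinarith
  refine ⟨?_, by linear_combination hgap⟩
  by_contra! ht
  nlinarith [mul_nonneg (mul_nonneg hε.le hδ.le) (sub_nonneg.mpr ht)]

theorem IsC4Free.isClique_neighborFinset_inter {V : Type*} [Fintype V] {G : SimpleGraph V}
    [DecidableRel G.Adj] (hG : IsC4Free G) {a b : V} (hab : a ≠ b) (hnadj : ¬G.Adj a b) :
    G.IsClique ↑(G.neighborFinset a ∩ G.neighborFinset b) := by
  intro u hu w hw huw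
  simp only [coe_inter, Set.mem_inter_iff, mem_coe, mem_neighborFinset] at hu hw
  by_contra huw'
  exact hG a u b w hab huw hu.1 hu.2.symm hw.2 hw.1.symm hnadj huw'

namespace SimpleGraph

variable {V : Type*} {G : SimpleGraph V} [Fintype V] [DecidableRel G.Adj]

theorem sum_card_neighborFinset_inter (S : Finset V) :
    ∑ v, #(G.neighborFinset v ∩ S) = ∑ s ∈ S, G.degree s := by
  calc ∑ v, #(G.neighborFinset v ∩ S) = ∑ v, #(S.bipartiteBelow G.Adj v) := by
        congr! 2 with v; ext s; simp [bipartiteBelow, adj_comm, and_comm]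
    _ = ∑ s ∈ S, #(univ.bipartiteAbove G.Adj s) :=
        (sum_card_bipartiteAbove_eq_sum_card_bipartiteBelow _).symm
    _ = ∑ s ∈ S, G.degree s := by
        simp [bipartiteAbove, ← card_neighborFinset_eq_degree, neighborFinset_eq_filter]

theorem sum_card_neighborFinset_inter_offDiag (S : Finset V) :
    ∑ p ∈ S.offDiag, #(G.neighborFinset p.1 ∩ G.neighborFinset p.2) =
      ∑ v, #(G.neighborFinset v ∩ S).offDiag := by
  calc ∑ p ∈ S.offDiag, #(G.neighborFinset p.1 ∩ G.neighborFinset p.2)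
      = ∑ p ∈ S.offDiag, #(univ.bipartiteAbove (fun p v ↦ G.Adj p.1 v ∧ G.Adj p.2 v) p) := by
        congr! 2 with p; ext v; simp [bipartiteAbove]
    _ = ∑ v, #(S.offDiag.bipartiteBelow (fun p v ↦ G.Adj p.1 v ∧ G.Adj p.2 v) v) :=
        sum_card_bipartiteAbove_eq_sum_card_bipartiteBelow _
    _ = ∑ v, #(G.neighborFinset v ∩ S).offDiag := by
        congr! 2 with v; ext ⟨a, b⟩
        simp only [bipartiteBelow, adj_comm, mem_filter, mem_offDiag, mem_inter, mem_neighborFinset]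
        tauto

theorem sq_sub_card_mul_le_card_mul_sum_card_inter (S : Finset V) :
    ((∑ s ∈ S, G.degree s : ℕ) : ℝ) ^ 2 - Fintype.card V * (∑ s ∈ S, G.degree s : ℕ) ≤
      Fintype.card V * (∑ p ∈ S.offDiag, #(G.neighborFinset p.1 ∩ G.neighborFinset p.2) : ℕ) := by
  set d : V → ℕ := fun v ↦ #(G.neighborFinset v ∩ S)
  have hcs := sq_sum_le_card_mul_sum_sq (s := univ) (f := fun v ↦ (d v : ℝ))
  have hcherries : ((∑ v, #(G.neighborFinset v ∩ S).offDiag : ℕ) : ℝ) =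
      ∑ v, (d v : ℝ) ^ 2 - ∑ v, (d v : ℝ) := by
    rw [← sum_sub_distrib, Nat.cast_sum]
    refine sum_congr rfl fun v _ ↦ ?_
    rw [offDiag_card, Nat.cast_sub (Nat.le_mul_self _)]
    push_cast
    ring
  rw [← sum_card_neighborFinset_inter, sum_card_neighborFinset_inter_offDiag, hcherries,
    Nat.cast_sum]
  rw [card_univ] at hcs
  linarith

theorem exists_mem_offDiag_mul_le_card_inter (S : Finset V) {δ : ℕ}
    (hdeg : ∀ s ∈ S, δ ≤ G.degree s) (hS : 1 < #S) (hn : Fintype.card V ≤ #S * δ) :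
    ∃ p ∈ S.offDiag, (δ : ℝ) * (#S * δ - Fintype.card V) ≤
      Fintype.card V * (#S - 1) * #(G.neighborFinset p.1 ∩ G.neighborFinset p.2) := by
  have hM : #S * δ ≤ ∑ s ∈ S, G.degree s := by
    simpa [mul_comm] using card_nsmul_le_sum S _ δ hdeg
  have hcount := G.sq_sub_card_mul_le_card_mul_sum_card_inter S
  obtain ⟨a, ha, b, hb, hab⟩ := one_lt_card.mp hS
  have hne : S.offDiag.Nonempty := ⟨(a, b), mem_offDiag.mpr ⟨ha, hb, hab⟩⟩
  refine exists_le_of_sum_le hne ?_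
  rw [sum_const, nsmul_eq_mul, ← mul_sum, offDiag_card, Nat.cast_sub (Nat.le_mul_self _),
    ← Nat.cast_sum]
  have hM' : (#S : ℝ) * δ ≤ (∑ s ∈ S, G.degree s : ℕ) := by exact_mod_cast hM
  have hn' : (Fintype.card V : ℝ) ≤ #S * δ := by exact_mod_cast hn
  have hS' : (1 : ℝ) ≤ #S := by exact_mod_cast hS.le
  generalize ((∑ s ∈ S, G.degree s : ℕ) : ℝ) = M at hcount hM'
  generalize ((∑ p ∈ S.offDiag, #(G.neighborFinset p.1 ∩ G.neighborFinset p.2) : ℕ) : ℝ) = R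
    at hcount ⊢
  have hgrowth : (#S : ℝ) * δ * (#S * δ - Fintype.card V) ≤ M ^ 2 - Fintype.card V * M := by
    nlinarith [mul_nonneg (sub_nonneg.mpr hM') (by linarith : 0 ≤ M + #S * δ - Fintype.card V)]
  push_cast
  calc ((#S : ℝ) * #S - #S) * (δ * (#S * δ - Fintype.card V))
      = (#S - 1) * ((#S : ℝ) * δ * (#S * δ - Fintype.card V)) := by ring
    _ ≤ (#S - 1) * (Fintype.card V * R) :=
        mul_le_mul_of_nonneg_left (hgrowth.trans hcount) (by linarith)
    _ = Fintype.card V * (#S - 1) * R := by ring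

end SimpleGraph

theorem stmt3 (ε : ℝ) (hε : 0 < ε) {V : Type*} [Fintype V] (G : SimpleGraph V)
    [DecidableRel G.Adj] (hC4 : IsC4Free G) (δ : ℕ) (hδ : δ ≤ G.minDegree)
    (S : Finset V) (hS : _root_.IsIndepSet G ↑S)
    (ht : ((Fintype.card V : ℝ) ^ 2 - (δ : ℝ) ^ 2) / (ε * (δ : ℝ) ^ 2) + 1 ≤ (S.card : ℝ)) :
    ∃ s : Finset V, G.IsClique ↑s ∧
      (1 - ε) * (δ : ℝ) ^ 2 / (Fintype.card V : ℝ) ≤ (s.card : ℝ) := by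
  by_cases hK : (1 - ε) * (δ : ℝ) ^ 2 / Fintype.card V ≤ 0
  · exact ⟨∅, by simp, by simpa using hK⟩
  obtain ⟨hnum, hn0⟩ : 0 < (1 - ε) * (δ : ℝ) ^ 2 ∧ 0 < (Fintype.card V : ℝ) := by
    rcases div_pos_iff.mp (not_le.mp hK) with h | ⟨-, h⟩
    · exact h
    · exact (h.not_ge (Nat.cast_nonneg _)).elim
  have hε1 : ε < 1 := by nlinarith [sq_nonneg (δ : ℝ)]
  have hδ0 : (0 : ℝ) < δ := Nat.cast_pos.mpr (Nat.pos_of_ne_zero (by rintro rfl; simp at hnum))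
  obtain ⟨v⟩ := Fintype.card_pos_iff.mp (by exact_mod_cast hn0)
  have hδn : (δ : ℝ) < Fintype.card V := by
    exact_mod_cast (hδ.trans (G.minDegree_le_degree v)).trans_lt (G.degree_lt_card_verts v)
  obtain ⟨ht1, hslack⟩ := one_lt_and_one_sub_mul_le_of_div_add_one_le hε hδ0 hδn ht
  have hn : Fintype.card V ≤ #S * δ := by
    have := mul_pos (mul_pos (sub_pos.mpr hε1) hδ0) (sub_pos.mpr ht1)
    exact_mod_cast (by linarith : (Fintype.card V : ℝ) ≤ #S * δ)
  obtain ⟨p, hp, hcard⟩ := G.exists_mem_offDiag_mul_le_card_inter S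
    (fun s _ ↦ hδ.trans (G.minDegree_le_degree s)) (Nat.one_lt_cast.mp ht1) hn
  obtain ⟨ha, hb, hab⟩ := mem_offDiag.mp hp
  refine ⟨_, hC4.isClique_neighborFinset_inter hab (hS ha hb hab), ?_⟩
  rw [div_le_iff₀ hn0]
  refine le_of_mul_le_mul_right ?_ (sub_pos.mpr ht1)
  calc (1 - ε) * (δ : ℝ) ^ 2 * (#S - 1) = δ * ((1 - ε) * δ * (#S - 1)) := by ring
    _ ≤ δ * (#S * δ - Fintype.card V) := by gcongr
    _ ≤ Fintype.card V * (#S - 1) * #(G.neighborFinset p.1 ∩ G.neighborFinset p.2) := hcard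
    _ = _ := by ring
end

section
/- If G is a C4-free graph on n vertices whose independence number is at most 2, then ω(G) ≥ 2n/5. -/
open SimpleGraph
open scoped Classical

/-! The complement `H = Gᶜ` is triangle-free (as `α(G) ≤ 2`) and has no induced `2K₂` (as `G`
has no induced `C₄`), and cliques of `G` are independent sets of `H`. If `H` contains an induced
5-cycle `c`, every non-isolated vertex of `H` has two neighbours on `c`, so the five independent
sets `N(cᵢ) ∪ {isolated vertices}` cover every vertex twice and one of them has at least `2n/5`
vertices. Otherwise `H` is bipartite: for an edge `uv`, the vertices with a neighbour in `N(v)`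
and the remaining ones both form independent sets, so one of them has at least `n/2` vertices. -/

open Finset

lemma Finset.exists_mul_card_le_of_le_card_filter_mem {ι α : Type*} [Fintype ι] [Nonempty ι]
    [Fintype α] (K : ι → Finset α) {k : ℕ} (h : ∀ a, k ≤ #{i | a ∈ K i}) :
    ∃ i, k * Fintype.card α ≤ Fintype.card ι * #(K i) := by
  have hsum : Fintype.card α * k ≤ ∑ i, #(K i) := by
    have := sum_card_bipartiteAbove_eq_sum_card_bipartiteBelow (s := univ) (t := univ)
      (r := fun i a => a ∈ K i)
    simp only [bipartiteAbove, bipartiteBelow, filter_mem_eq_inter, univ_inter] at this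
    rw [this, ← smul_eq_mul, ← Finset.card_univ, ← sum_const]
    exact sum_le_sum fun a _ => h a
  obtain ⟨i, -, hi⟩ := exists_le_of_sum_le (s := univ) (f := fun _ => k * Fintype.card α)
    (g := fun i => Fintype.card ι * #(K i)) univ_nonempty <| calc
      ∑ _i : ι, k * Fintype.card α = Fintype.card ι * (Fintype.card α * k) := by
        rw [sum_const, card_univ, smul_eq_mul, mul_comm k]
      _ ≤ ∑ i, Fintype.card ι * #(K i) := by rw [← mul_sum]; gcongr
  exact ⟨i, hi⟩

namespace SimpleGraph

variable {V : Type*} {H : SimpleGraph V}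

/-- `H` has no induced `2K₂`; the hypotheses force `a, b, c, d` to be distinct. -/
def IsTwoK2Free (H : SimpleGraph V) : Prop :=
  ∀ ⦃a b c d : V⦄, H.Adj a b → H.Adj c d →
    ¬H.Adj a c → ¬H.Adj a d → ¬H.Adj b c → ¬H.Adj b d → False

lemma CliqueFree.not_adj_of_adj_of_adj (h : H.CliqueFree 3) {x y z : V}
    (hxy : H.Adj x y) (hxz : H.Adj x z) : ¬H.Adj y z := fun hyz =>
  h {x, y, z} (is3Clique_triple_iff.mpr ⟨hxy, hxz, hyz⟩)

lemma cliqueFree_of_cliqueNum_lt [Finite V] {n : ℕ} (h : H.cliqueNum < n) : H.CliqueFree n :=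
  fun _ ht => (ht.card_eq ▸ ht.isClique.card_le_cliqueNum).not_gt h

section InducedPentagon

variable (hT : H.CliqueFree 3) (h2K2 : H.IsTwoK2Free) {c : Fin 5 → V}
  (hadj : ∀ i, H.Adj (c i) (c (i + 1))) (hnadj : ∀ i, ¬H.Adj (c i) (c (i + 2)))
include hadj hnadj

include h2K2 in
lemma adj_add_two_or_adj_add_three {x : V} {i : Fin 5} (hx : H.Adj x (c i)) :
    H.Adj x (c (i + 2)) ∨ H.Adj x (c (i + 3)) := by
  by_contra! h
  refine h2K2 hx (hadj (i + 2)) h.1 ?_ (hnadj i) fun h' => hnadj (i + 3) ?_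
  · simpa [show i + 2 + 1 = i + 3 by omega] using h.2
  · rwa [show i + 3 + 2 = i by omega, ← show i + 2 + 1 = i + 3 by omega, H.adj_comm]

include hT h2K2 in
lemma exists_not_adj_and_not_adj_succ (x : V) :
    ∃ j, ¬H.Adj x (c j) ∧ ¬H.Adj x (c (j + 1)) := by
  by_cases hx : ∃ i, H.Adj x (c i)
  · -- a vertex adjacent to `cⱼ` and `cⱼ₊₂` misses the opposite edge `cⱼ₊₃cⱼ₊₄` (triangles)
    have key : ∀ j, H.Adj x (c j) → H.Adj x (c (j + 2)) →
        ∃ j, ¬H.Adj x (c j) ∧ ¬H.Adj x (c (j + 1)) := by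
      intro j h0 h2
      refine ⟨j + 3, fun h3 => ?_, fun h4 => ?_⟩
      · refine hT.not_adj_of_adj_of_adj h2 h3 ?_
        simpa [show j + 2 + 1 = j + 3 by omega] using hadj (j + 2)
      · refine hT.not_adj_of_adj_of_adj h4 h0 ?_
        simpa [show j + 3 + 1 + 1 = j by omega] using hadj (j + 3 + 1)
    obtain ⟨i, hi⟩ := hx
    rcases adj_add_two_or_adj_add_three h2K2 hadj hnadj hi with h | h
    · exact key i hi h
    · exact key (i + 3) h (by rwa [show i + 3 + 2 = i by omega])
  · push Not at hx
    exact ⟨0, hx 0, hx 1⟩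

include hT h2K2 in
lemma exists_adj_ne_adj_of_adj {w z : V} (hwz : H.Adj w z) :
    ∃ i j, i ≠ j ∧ H.Adj w (c i) ∧ H.Adj w (c j) := by
  obtain ⟨j, hj, hj1⟩ := exists_not_adj_and_not_adj_succ hT h2K2 hadj hnadj z
  have hw : ∃ i, H.Adj w (c i) := by
    by_contra! hw
    exact h2K2 hwz (hadj j) (hw j) (hw (j + 1)) hj hj1
  obtain ⟨i, hi⟩ := hw
  rcases adj_add_two_or_adj_add_three h2K2 hadj hnadj hi with h | h
  · exact ⟨i, i + 2, by omega, hi, h⟩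
  · exact ⟨i, i + 3, by omega, hi, h⟩

include hT h2K2 in
lemma exists_isIndepSet_of_induced_pentagon [Fintype V] :
    ∃ s : Finset V, H.IsIndepSet s ∧ 2 * Fintype.card V ≤ 5 * #s := by
  let K : Fin 5 → Finset V := fun i => {w | H.Adj (c i) w ∨ ∀ z, ¬H.Adj w z}
  have hK : ∀ i, H.IsIndepSet (K i : Set V) := by
    intro i x hx y hy _ hxy
    simp only [K, coe_filter, mem_univ, true_and] at hx hy
    rcases hx with hx | hx
    · rcases hy with hy | hy
      · exact hT.not_adj_of_adj_of_adj hx hy hxy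
      · exact hy x hxy.symm
    · exact hx y hxy
  have hcover : ∀ w, 2 ≤ #{i | w ∈ K i} := by
    intro w
    by_cases hw : ∃ z, H.Adj w z
    · obtain ⟨z, hwz⟩ := hw
      obtain ⟨i, j, hij, hi, hj⟩ := exists_adj_ne_adj_of_adj hT h2K2 hadj hnadj hwz
      calc 2 = #{i, j} := (card_pair hij).symm
        _ ≤ #{i | w ∈ K i} := card_le_card fun k hk => by
          rcases mem_insert.mp hk with rfl | hk
          · simp [K, hi.symm]
          · simp [K, (mem_singleton.mp hk) ▸ hj.symm]
    · push Not at hw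
      simp [K, hw]
  obtain ⟨i, hi⟩ := exists_mul_card_le_of_le_card_filter_mem K hcover
  exact ⟨K i, hK i, by simpa using hi⟩

end InducedPentagon

lemma exists_isIndepSet_of_forall_not_induced_pentagon [Fintype V] (hT : H.CliqueFree 3)
    (h2K2 : H.IsTwoK2Free)
    (hC5 : ∀ c : Fin 5 → V, (∀ i, H.Adj (c i) (c (i + 1))) → ∃ i, H.Adj (c i) (c (i + 2))) :
    ∃ s : Finset V, H.IsIndepSet s ∧ Fintype.card V ≤ 2 * #s := by
  by_cases hedge : ∃ u v, H.Adj u v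
  · obtain ⟨u, v, huv⟩ := hedge
    let Q : Finset V := {w | ∃ b, H.Adj v b ∧ H.Adj b w}
    let P : Finset V := {w | ¬∃ b, H.Adj v b ∧ H.Adj b w}
    have hP : H.IsIndepSet (P : Set V) := by
      intro x hx y hy _ hxy
      simp only [P, coe_filter, mem_univ, true_and] at hx hy
      refine h2K2 hxy huv (fun h => hx ⟨u, huv.symm, h.symm⟩) (fun h => hy ⟨x, h.symm, hxy⟩)
        (fun h => hy ⟨u, huv.symm, h.symm⟩) (fun h => hx ⟨y, h.symm, hxy.symm⟩)
    have hQ : H.IsIndepSet (Q : Set V) := by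
      intro x hx y hy _ hxy
      simp only [Q, coe_filter, mem_univ, true_and] at hx hy
      obtain ⟨⟨b, hvb, hbx⟩, ⟨b', hvb', hb'y⟩⟩ := And.intro hx hy
      -- `x b v b' y` is a closed 5-walk all of whose chords would close a triangle
      obtain ⟨i, hi⟩ := hC5 ![x, b, v, b', y] fun i => by
        fin_cases i
        exacts [hbx.symm, hvb.symm, hvb', hb'y, hxy.symm]
      fin_cases i
      · exact hT.not_adj_of_adj_of_adj hbx hvb.symm hi
      · exact hT.not_adj_of_adj_of_adj hvb hvb' hi
      · exact hT.not_adj_of_adj_of_adj hvb'.symm hb'y hi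
      · exact hT.not_adj_of_adj_of_adj hb'y.symm hxy.symm hi
      · exact hT.not_adj_of_adj_of_adj hxy hbx.symm hi
    have hcard : #P + #Q = Fintype.card V := by
      rw [add_comm]
      exact (card_filter_add_card_filter_not _).trans card_univ
    rcases le_total #P #Q with h | h
    · exact ⟨Q, hQ, by omega⟩
    · exact ⟨P, hP, by omega⟩
  · push Not at hedge
    exact ⟨univ, fun x _ y _ _ => hedge x y, by rw [card_univ]; omega⟩

lemma exists_isIndepSet_two_mul_card_le_five_mul_card [Fintype V] (hT : H.CliqueFree 3)
    (h2K2 : H.IsTwoK2Free) : ∃ s : Finset V, H.IsIndepSet s ∧ 2 * Fintype.card V ≤ 5 * #s := by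
  by_cases hC5 : ∃ c : Fin 5 → V, (∀ i, H.Adj (c i) (c (i + 1))) ∧ ∀ i, ¬H.Adj (c i) (c (i + 2))
  · obtain ⟨c, hadj, hnadj⟩ := hC5
    exact exists_isIndepSet_of_induced_pentagon hT h2K2 hadj hnadj
  · push Not at hC5
    obtain ⟨s, hs, hcard⟩ := exists_isIndepSet_of_forall_not_induced_pentagon hT h2K2 hC5
    exact ⟨s, hs, by omega⟩

end SimpleGraph

lemma IsC4Free.isTwoK2Free_compl {V : Type*} {G : SimpleGraph V} (hC4 : IsC4Free G) :
    Gᶜ.IsTwoK2Free := by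
  intro a b c d hab hcd hac had hbc hbd
  have adj_of_not_adj_compl : ∀ {x y : V}, x ≠ y → ¬Gᶜ.Adj x y → G.Adj x y := fun hne h => by
    simpa [compl_adj, hne] using h
  have hac' : a ≠ c := by rintro rfl; exact had hcd
  have had' : a ≠ d := by rintro rfl; exact hac hcd.symm
  have hbc' : b ≠ c := by rintro rfl; exact hbd hcd
  have hbd' : b ≠ d := by rintro rfl; exact hbc hcd.symm
  exact hC4 a c b d hab.ne hcd.ne (adj_of_not_adj_compl hac' hac)
    (adj_of_not_adj_compl hbc'.symm fun h => hbc h.symm) (adj_of_not_adj_compl hbd' hbd)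
    (adj_of_not_adj_compl had'.symm fun h => had h.symm) ((compl_adj G a b).mp hab).2
    ((compl_adj G c d).mp hcd).2

theorem stmt5 {V : Type*} [Fintype V] (G : SimpleGraph V)
    (hC4 : IsC4Free G) (hα : _root_.indepNum G ≤ 2) :
    (G.cliqueNum : ℝ) ≥ 2 * (Fintype.card V : ℝ) / 5 := by
  have hT : Gᶜ.CliqueFree 3 := cliqueFree_of_cliqueNum_lt (Nat.lt_succ_of_le hα)
  obtain ⟨s, hs, hcard⟩ :=
    exists_isIndepSet_two_mul_card_le_five_mul_card hT hC4.isTwoK2Free_compl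
  have hs_le : #s ≤ G.cliqueNum := ((isIndepSet_compl G).mp hs).card_le_cliqueNum
  rw [ge_iff_le, div_le_iff₀ (by norm_num)]
  exact_mod_cast hcard.trans (by omega)
end

section
/- If G is a C4-free graph with independence number at most 2, then either the complement of G is bipartite, or G can be obtained from the 5-wheel W5 by substituting a (possibly empty) clique for each vertex. -/
open SimpleGraph
open scoped Classical

/-- The 5-wheel: a 5-cycle on `0,…,4` together with the hub `5` adjacent to all of them. -/
def W5 : SimpleGraph (Fin 6) :=
  SimpleGraph.fromRel (fun i j => i = 5 ∨ j = 5 ∨ ((i : ℕ) + 1) % 5 = (j : ℕ) ∧ (i : ℕ) < 5 ∧ (j : ℕ) < 5)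

/-! In the complement `H = Gᶜ` the hypotheses say that `H` is triangle-free and has no
induced `2K₂`. If `H` also has no induced `C₅`, fix an edge `ab`: every edge of `H` meets `N(a)`
or the set `S` of non-neighbours of `a` having a neighbour in `N(a)` (no `2K₂` with `ab`), an
edge inside `S` closes an induced `C₅` through `a`, and `N(a)` is independent, so `S` and its
complement form a bipartition.

If `H` has an induced 5-cycle `v`, then every non-isolated vertex `u` meets the cycle exactly in
the two neighbours of some `v k` (triangles and `2K₂`s exclude every other pattern), and two such
vertices are adjacent iff their indices are adjacent on the cycle. Hence `H` is a blow-up of `C₅`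
by independent sets plus isolated vertices; complementing, `G` is a clique blow-up of `W5` with
the isolated vertices of `H` in the hub. -/

namespace SimpleGraph

variable {V : Type*} {H : SimpleGraph V}

def Is2K2Free (H : SimpleGraph V) : Prop :=
  ∀ ⦃a b c d : V⦄, H.Adj a b → H.Adj c d →
    ¬H.Adj a c → ¬H.Adj a d → ¬H.Adj b c → ¬H.Adj b d → False

def IsInducedC5 (H : SimpleGraph V) (v : Fin 5 → V) : Prop :=
  ∀ i j, H.Adj (v i) (v j) ↔ (cycleGraph 5).Adj i j

theorem CliqueFree.not_adj_of_adj_of_adj_s6 (h : H.CliqueFree 3) {a b c : V}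
    (hab : H.Adj a b) (hac : H.Adj a c) : ¬H.Adj b c := fun hbc =>
  h {a, b, c} (is3Clique_triple_iff.mpr ⟨hab, hac, hbc⟩)

theorem isInducedC5_of_adj {a b c d e : V} (hab : H.Adj a b) (hbc : H.Adj b c)
    (hcd : H.Adj c d) (hde : H.Adj d e) (hea : H.Adj e a) (hac : ¬H.Adj a c)
    (had : ¬H.Adj a d) (hbd : ¬H.Adj b d) (hbe : ¬H.Adj b e) (hce : ¬H.Adj c e) :
    H.IsInducedC5 ![a, b, c, d, e] := by
  intro i j
  fin_cases i <;> fin_cases j <;> simp +decide [adj_comm, hea.symm, *]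

theorem cycleGraph_five_exists_adj_not_mem_not_mem (S : Finset (Fin 5))
    (hS : ∀ j j', (cycleGraph 5).Adj j j' → j ∉ S ∨ j' ∉ S) :
    ∃ j j', (cycleGraph 5).Adj j j' ∧ j ∉ S ∧ j' ∉ S := by
  revert S
  decide

set_option synthInstance.maxSize 1024 in
theorem cycleGraph_five_exists_eq_neighbors (S : Finset (Fin 5)) (hne : S.Nonempty)
    (hS : ∀ j j', (cycleGraph 5).Adj j j' → j ∉ S ∨ j' ∉ S)
    (hdom : ∀ i j j', i ∈ S → (cycleGraph 5).Adj j j' → ¬(cycleGraph 5).Adj i j →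
      ¬(cycleGraph 5).Adj i j' → j ∈ S ∨ j' ∈ S) :
    ∃ k, ∀ j, j ∈ S ↔ (cycleGraph 5).Adj k j := by
  revert S
  decide

theorem cycleGraph_five_exists_common_adj (k l : Fin 5) (hkl : ¬(cycleGraph 5).Adj k l) :
    ∃ j, (cycleGraph 5).Adj k j ∧ (cycleGraph 5).Adj l j := by
  revert k l
  decide

theorem cycleGraph_five_exists_adj_adj_of_adj (k l : Fin 5) (hkl : (cycleGraph 5).Adj k l) :
    ∃ j j', (cycleGraph 5).Adj k j ∧ (cycleGraph 5).Adj l j' ∧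
      ¬(cycleGraph 5).Adj k j' ∧ ¬(cycleGraph 5).Adj l j ∧ ¬(cycleGraph 5).Adj j j' := by
  revert k l
  decide

theorem not_adj_of_forall_not_isInducedC5 (ht : H.CliqueFree 3)
    (hC5 : ∀ v, ¬H.IsInducedC5 v) {a u w x y : V} (hau : ¬H.Adj a u) (haw : ¬H.Adj a w)
    (hax : H.Adj a x) (hxu : H.Adj x u) (hay : H.Adj a y) (hyw : H.Adj y w) :
    ¬H.Adj u w := fun huw =>
  hC5 _ <| isInducedC5_of_adj hax hxu huw hyw.symm hay.symm hau haw
    (ht.not_adj_of_adj_of_adj_s6 hxu.symm huw) (ht.not_adj_of_adj_of_adj_s6 hax hay)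
    (ht.not_adj_of_adj_of_adj_s6 huw.symm hyw.symm)

theorem colorable_two_of_forall_not_isInducedC5 (ht : H.CliqueFree 3) (h2 : H.Is2K2Free)
    (hC5 : ∀ v, ¬H.IsInducedC5 v) : H.Colorable 2 := by
  by_cases hE : ∃ a b, H.Adj a b
  swap
  · push Not at hE
    exact ⟨Coloring.mk (fun _ => 0) fun h => (hE _ _ h).elim⟩
  obtain ⟨a, b, hab⟩ := hE
  let S : Set V := {u | ¬H.Adj a u ∧ ∃ x, H.Adj a x ∧ H.Adj x u}
  suffices hS : ∀ ⦃u w⦄, H.Adj u w → (u ∈ S ↔ w ∉ S) from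
    (Coloring.mk (fun u => decide (u ∈ S)) fun huw => by simp [hS huw]).colorable
  intro u w huw
  by_cases hau : H.Adj a u
  · have haw : ¬H.Adj a w := ht.not_adj_of_adj_of_adj_s6 hau.symm huw
    simpa [S, hau, haw] using ⟨u, hau, huw⟩
  by_cases haw : H.Adj a w
  · have hau : ¬H.Adj a u := ht.not_adj_of_adj_of_adj_s6 haw.symm huw.symm
    simpa [S, hau, haw] using ⟨w, haw, huw.symm⟩
  simp only [S, Set.mem_ofPred_eq, hau, haw, not_false_eq_true, true_and]
  refine ⟨fun ⟨x, hax, hxu⟩ ⟨y, hay, hyw⟩ =>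
    not_adj_of_forall_not_isInducedC5 ht hC5 hau haw hax hxu hay hyw huw, fun hw => ?_⟩
  by_contra hu
  push Not at hu hw
  exact h2 hab huw hau haw (hu b hab) (hw b hab)

namespace IsInducedC5

variable {v : Fin 5 → V}

theorem not_adj_and_adj (ht : H.CliqueFree 3) (hv : H.IsInducedC5 v) {u : V} {j j' : Fin 5}
    (hjj' : (cycleGraph 5).Adj j j') : ¬(H.Adj u (v j) ∧ H.Adj u (v j')) := fun ⟨hj, hj'⟩ =>
  ht.not_adj_of_adj_of_adj_s6 hj hj' ((hv j j').2 hjj')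

theorem exists_forall_adj_iff (ht : H.CliqueFree 3) (h2 : H.Is2K2Free) (hv : H.IsInducedC5 v)
    {u w : V} (huw : H.Adj u w) : ∃ k, ∀ j, H.Adj u (v j) ↔ (cycleGraph 5).Adj k j := by
  let S : Finset (Fin 5) := {j | H.Adj u (v j)}
  have hS_indep : ∀ j j', (cycleGraph 5).Adj j j' → j ∉ S ∨ j' ∉ S := fun j j' hjj' => by
    simpa only [S, Finset.mem_filter, Finset.mem_univ, true_and] using
      not_and_or.mp (hv.not_adj_and_adj ht hjj')
  have hS_nonempty : S.Nonempty := by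
    by_contra hS
    obtain ⟨j, j', hjj', hj, hj'⟩ := cycleGraph_five_exists_adj_not_mem_not_mem
      {j | H.Adj w (v j)} fun j j' hjj' => by
        simpa only [Finset.mem_filter, Finset.mem_univ, true_and] using
          not_and_or.mp (hv.not_adj_and_adj ht hjj')
    simp only [Finset.not_nonempty_iff_eq_empty, Finset.filter_eq_empty_iff, S] at hS
    simp only [Finset.mem_filter, Finset.mem_univ, true_and] at hj hj'
    exact h2 huw ((hv j j').2 hjj') (hS (Finset.mem_univ j)) (hS (Finset.mem_univ j')) hj hj'
  have hS_dom : ∀ i j j', i ∈ S → (cycleGraph 5).Adj j j' → ¬(cycleGraph 5).Adj i j →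
      ¬(cycleGraph 5).Adj i j' → j ∈ S ∨ j' ∈ S := fun i j j' hi hjj' hij hij' => by
    by_contra! h
    simp only [Finset.mem_filter, Finset.mem_univ, true_and, S] at hi h
    exact h2 hi ((hv j j').2 hjj') h.1 h.2 (mt (hv i j).1 hij) (mt (hv i j').1 hij')
  obtain ⟨k, hk⟩ := cycleGraph_five_exists_eq_neighbors S hS_nonempty hS_indep hS_dom
  exact ⟨k, fun j => by simpa [S] using hk j⟩

theorem adj_iff_of_forall_adj_iff (ht : H.CliqueFree 3) (h2 : H.Is2K2Free)
    (hv : H.IsInducedC5 v) {u w : V} {k l : Fin 5}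
    (hu : ∀ j, H.Adj u (v j) ↔ (cycleGraph 5).Adj k j)
    (hw : ∀ j, H.Adj w (v j) ↔ (cycleGraph 5).Adj l j) :
    H.Adj u w ↔ (cycleGraph 5).Adj k l := by
  refine ⟨fun huw => ?_, fun hkl => ?_⟩
  · by_contra hkl
    obtain ⟨j, hkj, hlj⟩ := cycleGraph_five_exists_common_adj k l hkl
    exact ht.not_adj_of_adj_of_adj_s6 ((hu j).2 hkj).symm ((hw j).2 hlj).symm huw
  · by_contra huw
    obtain ⟨j, j', hkj, hlj', hkj', hlj, hjj'⟩ := cycleGraph_five_exists_adj_adj_of_adj k l hkl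
    exact h2 ((hu j).2 hkj).symm ((hw j').2 hlj').symm (mt (hv j j').1 hjj')
      (fun h => hlj ((hw j).1 h.symm)) (fun h => hkj' ((hu j').1 h)) huw

end IsInducedC5

noncomputable def cycleClass (H : SimpleGraph V) (v : Fin 5 → V) (u : V) : Option (Fin 5) :=
  if h : ∃ k, ∀ j, H.Adj u (v j) ↔ (cycleGraph 5).Adj k j then some h.choose else none

theorem exists_cycleClass_eq_some {v : Fin 5 → V} {u : V}
    (h : ∃ k, ∀ j, H.Adj u (v j) ↔ (cycleGraph 5).Adj k j) :
    ∃ k, H.cycleClass v u = some k ∧ ∀ j, H.Adj u (v j) ↔ (cycleGraph 5).Adj k j :=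
  ⟨h.choose, dif_pos h, h.choose_spec⟩

theorem forall_adj_iff_of_cycleClass_eq_some {v : Fin 5 → V} {u : V} {k : Fin 5}
    (h : H.cycleClass v u = some k) : ∀ j, H.Adj u (v j) ↔ (cycleGraph 5).Adj k j := by
  unfold cycleClass at h
  split_ifs at h with hu
  exact Option.some_inj.mp h ▸ hu.choose_spec

theorem IsInducedC5.adj_iff_cycleClass (ht : H.CliqueFree 3) (h2 : H.Is2K2Free)
    {v : Fin 5 → V} (hv : H.IsInducedC5 v) (u w : V) :
    H.Adj u w ↔ ∃ k l, H.cycleClass v u = some k ∧ H.cycleClass v w = some l ∧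
      (cycleGraph 5).Adj k l := by
  refine ⟨fun huw => ?_, fun ⟨k, l, hk, hl, hkl⟩ => ?_⟩
  · obtain ⟨k, hk, hku⟩ := exists_cycleClass_eq_some (hv.exists_forall_adj_iff ht h2 huw)
    obtain ⟨l, hl, hlw⟩ := exists_cycleClass_eq_some (hv.exists_forall_adj_iff ht h2 huw.symm)
    exact ⟨k, l, hk, hl, (hv.adj_iff_of_forall_adj_iff ht h2 hku hlw).1 huw⟩
  · exact (hv.adj_iff_of_forall_adj_iff ht h2 (forall_adj_iff_of_cycleClass_eq_some hk)
      (forall_adj_iff_of_cycleClass_eq_some hl)).2 hkl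

end SimpleGraph

-- `k ↦ 2 k` maps the complement of the 5-cycle onto the rim `0, 1, 2, 3, 4` of `W5`.
def wheelVertex : Option (Fin 5) → Fin 6
  | none => 5
  | some k => (2 * k).castSucc

theorem eq_or_adj_wheelVertex_iff : ∀ x y : Option (Fin 5),
    (wheelVertex x = wheelVertex y ∨ W5.Adj (wheelVertex x) (wheelVertex y)) ↔
      ¬∃ k l, x = some k ∧ y = some l ∧ (cycleGraph 5).Adj k l := by
  simp only [W5, fromRel_adj]
  decide

theorem IsC4Free.is2K2Free_compl {V : Type*} {G : SimpleGraph V} (h : IsC4Free G) :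
    Gᶜ.Is2K2Free := by
  intro a b c d hab hcd hac had hbc hbd
  have adj_of : ∀ {x y}, x ≠ y → ¬Gᶜ.Adj x y → G.Adj x y := fun hxy hn =>
    not_not.mp fun h => hn ((G.compl_adj _ _).2 ⟨hxy, h⟩)
  have hac' : G.Adj a c := adj_of (by rintro rfl; exact had hcd) hac
  have hbc' : G.Adj b c := adj_of (by rintro rfl; exact hac hab) hbc
  have hbd' : G.Adj b d := adj_of (by rintro rfl; exact had hab) hbd
  have had' : G.Adj a d := adj_of (by rintro rfl; exact hac hcd.symm) had
  exact h a c b d hab.ne hcd.ne hac' hbc'.symm hbd' had'.symm ((G.compl_adj a b).1 hab).2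
    ((G.compl_adj c d).1 hcd).2

theorem cliqueFree_three_compl_of_indepNum_le_two {V : Type*} [Finite V] {G : SimpleGraph V}
    (h : _root_.indepNum G ≤ 2) : Gᶜ.CliqueFree 3 := fun s hs => by
  have hcard := IsClique.card_le_cliqueNum (tc := hs.isClique)
  rw [hs.card_eq] at hcard
  exact absurd (hcard.trans h) (by decide)

theorem stmt6 {V : Type*} [Fintype V] (G : SimpleGraph V)
    (hC4 : IsC4Free G) (hα : _root_.indepNum G ≤ 2) :
    Gᶜ.Colorable 2 ∨
      ∃ f : V → Fin 6, ∀ u v : V, u ≠ v →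
        (G.Adj u v ↔ (f u = f v ∨ W5.Adj (f u) (f v))) := by
  have ht : Gᶜ.CliqueFree 3 := cliqueFree_three_compl_of_indepNum_le_two hα
  have h2 : Gᶜ.Is2K2Free := hC4.is2K2Free_compl
  by_cases hC5 : ∃ c, Gᶜ.IsInducedC5 c
  · obtain ⟨c, hc⟩ := hC5
    refine Or.inr ⟨fun u => wheelVertex (Gᶜ.cycleClass c u), fun u w huw => ?_⟩
    rw [eq_or_adj_wheelVertex_iff, ← hc.adj_iff_cycleClass ht h2, compl_adj]
    tauto
  · exact Or.inl (colorable_two_of_forall_not_isInducedC5 ht h2 (not_exists.mp hC5))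
end

section
/- Let G be a C4-free graph on n vertices with minimum degree δ, let S = {x_1,…,x_t} be an independent set in G with neighborhoods A_i = N(x_i), and let m = max over i ≠ j of |A_i ∩ A_j|. Then t·δ < n + C(t,2)·m, and consequently ω(G) ≥ (tδ − n)/C(t,2). -/
open SimpleGraph
open scoped Classical

/-!
Count, for every vertex `v`, the number `d v` of vertices of `S` adjacent to it. Double counting
gives `∑ v, d v = ∑_{x ∈ S} deg x ≥ t δ` and `∑ v, d v (d v - 1) = ∑_{x ≠ y ∈ S} |A_x ∩ A_y|`,
which is at most `2 C(t,2) m`. Independence of `S` forces `d v = 0` on `S`, and elsewhere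
`d ≤ 1 + d (d - 1) / 2`; summing gives `t δ ≤ (n - t) + C(t,2) m < n + C(t,2) m`. Finally, in a
`C₄`-free graph the common neighbourhood of two non-adjacent vertices is a clique, so `m ≤ ω(G)`.
-/

open Finset

theorem IsC4Free.isClique_commonNeighbors {V : Type*} {G : SimpleGraph V} (hG : IsC4Free G)
    {x y : V} (hxy : x ≠ y) (hnadj : ¬G.Adj x y) : G.IsClique (G.commonNeighbors x y) := by
  intro a ha b hb hab
  by_contra hnab
  exact hG x a y b hxy hab ha.1 ha.2.symm hb.2 hb.1.symm hnadj hnab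

theorem two_mul_le_two_add_mul_self_sub (d : ℕ) : 2 * d ≤ 2 + (d * d - d) := by
  rw [← Nat.mul_sub_one]
  rcases d with _ | d
  · simp
  · rw [Nat.add_sub_cancel]
    nlinarith [Nat.le_mul_self d]

theorem mul_self_sub_eq_two_mul_choose_two (t : ℕ) : t * t - t = 2 * t.choose 2 := by
  rw [Nat.choose_two_right, Nat.mul_div_cancel' (Nat.even_mul_pred_self t).two_dvd,
    Nat.mul_sub_one]

namespace SimpleGraph

variable {V : Type*} (G : SimpleGraph V) [DecidableRel G.Adj]

theorem sum_degree_eq_sum_card_bipartiteBelow [Fintype V] (S : Finset V) :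
    ∑ x ∈ S, G.degree x = ∑ v, #(S.bipartiteBelow G.Adj v) := by
  simp_rw [← card_neighborFinset_eq_degree, neighborFinset_eq_filter]
  exact sum_card_bipartiteAbove_eq_sum_card_bipartiteBelow _

theorem sum_card_inter_neighborFinset_offDiag [Fintype V] [DecidableEq V] (S : Finset V) :
    ∑ p ∈ S.offDiag, #(G.neighborFinset p.1 ∩ G.neighborFinset p.2) =
      ∑ v, #(S.bipartiteBelow G.Adj v).offDiag := by
  convert sum_card_bipartiteAbove_eq_sum_card_bipartiteBelow (s := S.offDiag) (t := univ)
    (r := fun p v => G.Adj p.1 v ∧ G.Adj p.2 v) using 3 with p _ v _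
  · ext; simp [bipartiteAbove]
  · ext; simp only [bipartiteBelow, mem_offDiag, mem_filter, ne_eq]; tauto

theorem bipartiteBelow_adj_eq_empty {S : Finset V} (hS : _root_.IsIndepSet G S) {v : V}
    (hv : v ∈ S) : S.bipartiteBelow G.Adj v = ∅ :=
  filter_eq_empty_iff.2 fun _ hx hxv => hS hx hv (G.ne_of_adj hxv) hxv

theorem card_mul_minDegree_le [Fintype V] [DecidableEq V] {S : Finset V}
    (hS : _root_.IsIndepSet G S) {m : ℕ}
    (hm : ∀ p ∈ S.offDiag, #(G.neighborFinset p.1 ∩ G.neighborFinset p.2) ≤ m) :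
    #S * G.minDegree ≤ (Fintype.card V - #S) + (#S).choose 2 * m := by
  set d : V → ℕ := fun v => #(S.bipartiteBelow G.Adj v)
  have hdeg : #S * G.minDegree ≤ ∑ v, d v := by
    rw [← sum_degree_eq_sum_card_bipartiteBelow]
    exact card_nsmul_le_sum _ _ _ fun x _ => G.minDegree_le_degree x
  have hcompl : ∑ v, d v = ∑ v ∈ Sᶜ, d v :=
    (sum_subset (subset_univ _) fun v _ hv => by
      simp [d, G.bipartiteBelow_adj_eq_empty hS (notMem_compl.1 hv)]).symm
  have hpairs : ∑ v, (d v * d v - d v) ≤ 2 * ((#S).choose 2 * m) := by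
    simp_rw [d, ← offDiag_card, ← sum_card_inter_neighborFinset_offDiag, ← mul_assoc,
      ← mul_self_sub_eq_two_mul_choose_two, ← offDiag_card]
    exact sum_le_card_nsmul _ _ _ hm
  have hsum : 2 * ∑ v ∈ Sᶜ, d v ≤ 2 * #Sᶜ + ∑ v, (d v * d v - d v) :=
    calc 2 * ∑ v ∈ Sᶜ, d v = ∑ v ∈ Sᶜ, 2 * d v := mul_sum _ _ _
      _ ≤ ∑ v ∈ Sᶜ, (2 + (d v * d v - d v)) :=
        sum_le_sum fun v _ => two_mul_le_two_add_mul_self_sub (d v)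
      _ = 2 * #Sᶜ + ∑ v ∈ Sᶜ, (d v * d v - d v) := by
        rw [sum_add_distrib, sum_const, smul_eq_mul, mul_comm]
      _ ≤ 2 * #Sᶜ + ∑ v, (d v * d v - d v) := by gcongr; exact subset_univ _
  rw [card_compl] at hsum
  omega

end SimpleGraph

theorem stmt9 {V : Type*} [Fintype V] [DecidableEq V] (G : SimpleGraph V) [DecidableRel G.Adj]
    (hC4 : IsC4Free G) (S : Finset V) (hS : _root_.IsIndepSet G ↑S) (ht : 2 ≤ S.card)
    (m : ℕ)
    (hm : m = S.offDiag.sup fun p => (G.neighborFinset p.1 ∩ G.neighborFinset p.2).card) :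
    S.card * G.minDegree < Fintype.card V + (S.card.choose 2) * m ∧
      (G.cliqueNum : ℝ) ≥
        ((S.card : ℝ) * (G.minDegree : ℝ) - (Fintype.card V : ℝ)) / (S.card.choose 2 : ℝ) := by
  have hm_le_cliqueNum : m ≤ G.cliqueNum := hm ▸ Finset.sup_le fun p hp => by
    obtain ⟨hx, hy, hxy⟩ := Finset.mem_offDiag.1 hp
    refine ((hC4.isClique_commonNeighbors hxy (hS hx hy hxy)).subset ?_).card_le_cliqueNum
    simp [commonNeighbors]
  have hcount : S.card * G.minDegree < Fintype.card V + S.card.choose 2 * m := by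
    have := G.card_mul_minDegree_le hS fun p hp => hm ▸ Finset.le_sup hp
    have := S.card_le_univ
    omega
  refine ⟨hcount, ?_⟩
  have hcliqueNum : S.card * G.minDegree ≤ Fintype.card V + S.card.choose 2 * G.cliqueNum :=
    (hcount.trans_le (by gcongr)).le
  have hC : (0 : ℝ) < S.card.choose 2 := by exact_mod_cast Nat.choose_pos ht
  rw [ge_iff_le, div_le_iff₀ hC, sub_le_iff_le_add, mul_comm (G.cliqueNum : ℝ), add_comm]
  exact_mod_cast hcliqueNum
end

section
/- If G is a C4-free graph on n vertices with n/2 ≤ δ(G) ≤ 11n/15, then ω(G) ≥ n/6. -/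
open SimpleGraph
open scoped Classical

/-! Let `v` have minimum degree `δ`, and let `M` be its non-neighbourhood, of size `n - 1 - δ`.
In a C4-free graph the common neighbourhood of two non-adjacent vertices is a clique.
If `M` is a clique, then `ω ≥ n - 1 - δ ≥ 4n/15 - 1`, which together with `ω ≥ 2` gives
`ω ≥ n/6`. Otherwise pick non-adjacent `u, w ∈ M`: every other vertex of `M` is a common
non-neighbour of `v` and `u`, or of `v` and `w`, or a common neighbour of `u` and `w`. By
inclusion–exclusion each of the first two sets has at most `n - 2 - 2δ + ω` elements, so
`n - 3 - δ ≤ 2(n - 2 - 2δ + ω) + ω`, i.e. `3δ + 1 ≤ n + 3ω`, and `δ ≥ n/2` gives `ω ≥ n/6`. -/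

namespace SimpleGraph

theorem Adj.two_le_cliqueNum {V : Type*} [Finite V] {G : SimpleGraph V} {x y : V}
    (h : G.Adj x y) : 2 ≤ G.cliqueNum := by
  have hxy : G.IsClique (↑({x, y} : Finset V) : Set V) := by
    rw [Finset.coe_pair]
    exact isClique_pair.mpr fun _ => h
  simpa [Finset.card_pair h.ne] using hxy.card_le_cliqueNum

variable {V : Type*} [Fintype V] (G : SimpleGraph V) [DecidableRel G.Adj]

theorem card_compl_neighborFinset_inter_add_le {v x : V} (hvx : Gᶜ.Adj v x) :
    (Gᶜ.neighborFinset v ∩ Gᶜ.neighborFinset x).card + G.degree v + G.degree x + 2 ≤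
      Fintype.card V + (G.neighborFinset v ∩ G.neighborFinset x).card := by
  have hcover : (Finset.univ : Finset V) ⊆
      (Gᶜ.neighborFinset v ∪ Gᶜ.neighborFinset x) ∪ (G.neighborFinset v ∩ G.neighborFinset x) := by
    intro y _
    simp only [Finset.mem_union, Finset.mem_inter, mem_neighborFinset]
    grind [G.adj_symm, compl_adj]
  have h := (Finset.card_le_card hcover).trans (Finset.card_union_le _ _)
  have hunion := Finset.card_union_add_card_inter (Gᶜ.neighborFinset v) (Gᶜ.neighborFinset x)
  rw [Finset.card_univ] at h
  simp only [card_neighborFinset_eq_degree, degree_compl] at h hunion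
  have := G.degree_lt_card_verts v
  have := G.degree_lt_card_verts x
  omega

theorem card_le_card_inter_compl_neighborFinset_add (s : Finset V) (u w : V) :
    s.card ≤ (s ∩ Gᶜ.neighborFinset u).card + (s ∩ Gᶜ.neighborFinset w).card +
      (G.neighborFinset u ∩ G.neighborFinset w).card + 2 := by
  have hcover : s ⊆ insert u (insert w ((s ∩ Gᶜ.neighborFinset u) ∪ (s ∩ Gᶜ.neighborFinset w) ∪
      (G.neighborFinset u ∩ G.neighborFinset w))) := by
    intro p hp
    simp only [Finset.mem_insert, Finset.mem_union, Finset.mem_inter, mem_neighborFinset,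
      compl_adj]
    tauto
  grw [Finset.card_le_card hcover, Finset.card_insert_le, Finset.card_insert_le,
    Finset.card_union_le, Finset.card_union_le]

end SimpleGraph

namespace IsC4Free

variable {V : Type*} [Fintype V] {G : SimpleGraph V} [DecidableRel G.Adj]

theorem isClique_neighborFinset_inter_s12 (hC4 : IsC4Free G) {x y : V} (hxy : Gᶜ.Adj x y) :
    G.IsClique (↑(G.neighborFinset x ∩ G.neighborFinset y) : Set V) := by
  intro p hp q hq hpq
  simp only [Finset.coe_inter, Set.mem_inter_iff, Finset.mem_coe, mem_neighborFinset] at hp hq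
  by_contra hnpq
  exact hC4 x p y q hxy.ne hpq hp.1 hp.2.symm hq.2 hq.1.symm hxy.2 hnpq

theorem card_neighborFinset_inter_le_cliqueNum (hC4 : IsC4Free G) {x y : V} (hxy : Gᶜ.Adj x y) :
    (G.neighborFinset x ∩ G.neighborFinset y).card ≤ G.cliqueNum :=
  (hC4.isClique_neighborFinset_inter_s12 hxy).card_le_cliqueNum

theorem three_mul_minDegree_add_one_le (hC4 : IsC4Free G) {v u w : V}
    (hv : G.degree v = G.minDegree) (hu : Gᶜ.Adj v u) (hw : Gᶜ.Adj v w) (huw : Gᶜ.Adj u w) :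
    3 * G.minDegree + 1 ≤ Fintype.card V + 3 * G.cliqueNum := by
  have hM := G.card_le_card_inter_compl_neighborFinset_add (Gᶜ.neighborFinset v) u w
  have hTu := G.card_compl_neighborFinset_inter_add_le hu
  have hTw := G.card_compl_neighborFinset_inter_add_le hw
  have hcu := hC4.card_neighborFinset_inter_le_cliqueNum hu
  have hcw := hC4.card_neighborFinset_inter_le_cliqueNum hw
  have hcuw := hC4.card_neighborFinset_inter_le_cliqueNum huw
  have := G.minDegree_le_degree u
  have := G.minDegree_le_degree w
  have := G.degree_lt_card_verts v
  rw [card_neighborFinset_eq_degree, degree_compl] at hM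
  omega

theorem three_mul_minDegree_add_one_le_or_card_le [Nonempty V] (hC4 : IsC4Free G) :
    3 * G.minDegree + 1 ≤ Fintype.card V + 3 * G.cliqueNum ∨
      Fintype.card V ≤ G.minDegree + 1 + G.cliqueNum := by
  obtain ⟨v, hv⟩ := G.exists_minimal_degree_vertex
  by_cases hM : G.IsClique (↑(Gᶜ.neighborFinset v) : Set V)
  · right
    have hclique := hM.card_le_cliqueNum
    have := G.degree_lt_card_verts v
    rw [card_neighborFinset_eq_degree, degree_compl, ← hv] at hclique
    omega
  · left
    obtain ⟨u, hu, w, hw, huw⟩ : ∃ u, Gᶜ.Adj v u ∧ ∃ w, Gᶜ.Adj v w ∧ Gᶜ.Adj u w := by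
      simpa [IsClique, Set.Pairwise, compl_adj, and_assoc] using hM
    exact hC4.three_mul_minDegree_add_one_le hv.symm hu hw huw

end IsC4Free

theorem stmt12 {V : Type*} [Fintype V] (G : SimpleGraph V) [DecidableRel G.Adj]
    (hC4 : IsC4Free G) (hδ1 : (Fintype.card V : ℝ) / 2 ≤ (G.minDegree : ℝ))
    (hδ2 : (G.minDegree : ℝ) ≤ 11 * (Fintype.card V : ℝ) / 15) :
    (G.cliqueNum : ℝ) ≥ (Fintype.card V : ℝ) / 6 := by
  rcases isEmpty_or_nonempty V with _ | _
  · simp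
  have hn : (0 : ℝ) < Fintype.card V := by exact_mod_cast Fintype.card_pos
  have hδ : 0 < G.minDegree := by
    have : (0 : ℝ) < G.minDegree := by linarith
    exact_mod_cast this
  obtain ⟨v, hv⟩ := G.exists_minimal_degree_vertex
  obtain ⟨w, hvw⟩ := (G.degree_pos_iff_exists_adj v).mp (hv ▸ hδ)
  have hc2 : (2 : ℝ) ≤ G.cliqueNum := by exact_mod_cast hvw.two_le_cliqueNum
  rcases hC4.three_mul_minDegree_add_one_le_or_card_le with h | h
  · have : (3 * G.minDegree + 1 : ℝ) ≤ Fintype.card V + 3 * G.cliqueNum := by exact_mod_cast h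
    linarith
  · have : (Fintype.card V : ℝ) ≤ G.minDegree + 1 + G.cliqueNum := by exact_mod_cast h
    -- the weights `5/8, 3/8` on `ω ≥ 4n/15 - 1` and `ω ≥ 2` give `ω ≥ n/6 + 1/8`
    linarith
end

section
/- Let G be a 2k-regular C4-free graph on 4k+1 vertices, let u, w be a non-adjacent dominating pair with unique common neighbor x, and let U_1 = N(u) ∩ N(x) \ {w}, W_1 = N(w) ∩ N(x) \ {u}. Then U_1 and W_1 each induce cliques in G. -/
open SimpleGraph
open scoped Classical

/-!
Suppose two distinct non-adjacent vertices `a, b ∈ N(u) ∩ N(x) \ {w}` existed, and let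
`d = 2k`. By C4-freeness every common neighbour of `a` and `b` other than `u` and `x` lies in
`N(u) ∩ N(x)`, so `|N(a) ∪ N(b)| ≥ 2d - |N(u) ∩ N(x)|`. Since `x` is the only common
neighbour of `u` and `w`, neither `a` nor `b` sees `w`, and C4-freeness puts every common
neighbour of `w` and `a` (or `b`) in `N[x]`. So `N(a) ∪ N(b)`, the vertices `a, b, w` and
`N(w) \ N[x]` are pairwise disjoint; as `N(u) ∩ N(x)` and `N(w) ∩ N(x)` are disjoint parts of
`N(x)`, counting gives at least `2d + 2` vertices, one more than there are.
-/

open Finset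

namespace SimpleGraph

variable {V : Type*} {G : SimpleGraph V} [Fintype V] [DecidableRel G.Adj]

theorem card_inter_neighborFinset_add_card_inter_neighborFinset_le_degree {u w x : V}
    (huniq : ∀ y, G.Adj u y → G.Adj w y → y = x) :
    #(G.neighborFinset u ∩ G.neighborFinset x) + #(G.neighborFinset w ∩ G.neighborFinset x) ≤
      G.degree x := by
  rw [← card_neighborFinset_eq_degree, ← card_union_of_disjoint]
  · exact card_le_card (union_subset inter_subset_right inter_subset_right)
  · refine Finset.disjoint_left.2 fun y hu hw => ?_
    simp only [mem_inter, mem_neighborFinset] at hu hw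
    exact hu.2.ne' (huniq y hu.1 hw.1)

end SimpleGraph

namespace IsC4Free

variable {V : Type*} {G : SimpleGraph V}

theorem isClique_commonNeighbors_s14 (hG : IsC4Free G) {p q : V} (hpq : p ≠ q)
    (hnadj : ¬G.Adj p q) : G.IsClique (G.commonNeighbors p q) := by
  intro c hc d hd hcd
  by_contra hnot
  exact hG p c q d hpq hcd hc.1 hc.2.symm hd.2 hd.1.symm hnadj hnot

variable [Fintype V] [DecidableRel G.Adj]

theorem card_inter_neighborFinset_le (hG : IsC4Free G) {u x a b : V}
    (ha : a ∈ G.commonNeighbors u x) (hb : b ∈ G.commonNeighbors u x) (hab : a ≠ b)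
    (hnab : ¬G.Adj a b) :
    #(G.neighborFinset a ∩ G.neighborFinset b) ≤
      #(G.neighborFinset u ∩ G.neighborFinset x) := by
  have hclique := hG.isClique_commonNeighbors_s14 hab hnab
  have hsub : insert a (insert b (G.neighborFinset a ∩ G.neighborFinset b)) ⊆
      insert u (insert x (G.neighborFinset u ∩ G.neighborFinset x)) := by
    intro d hd
    simp only [mem_insert, mem_inter, mem_neighborFinset] at hd ⊢
    rcases hd with rfl | rfl | ⟨had, hbd⟩
    · exact Or.inr (Or.inr ha)
    · exact Or.inr (Or.inr hb)
    by_cases hdu : d = u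
    · exact Or.inl hdu
    by_cases hdx : d = x
    · exact Or.inr (Or.inl hdx)
    have hd : d ∈ G.commonNeighbors a b := ⟨had, hbd⟩
    exact Or.inr (Or.inr ⟨hclique ⟨ha.1.symm, hb.1.symm⟩ hd (Ne.symm hdu),
      hclique ⟨ha.2.symm, hb.2.symm⟩ hd (Ne.symm hdx)⟩)
  have hcard := card_le_card hsub
  rw [card_insert_of_notMem (by simp [hab]), card_insert_of_notMem (by simp)] at hcard
  have := card_insert_le u (insert x (G.neighborFinset u ∩ G.neighborFinset x))
  have := card_insert_le x (G.neighborFinset u ∩ G.neighborFinset x)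
  omega

theorem disjoint_neighborFinset_sdiff (hG : IsC4Free G) {a w x : V} (haw : a ≠ w)
    (hnaw : ¬G.Adj a w) (hax : G.Adj a x) (hwx : G.Adj w x) :
    Disjoint (G.neighborFinset a) (G.neighborFinset w \ insert x (G.neighborFinset x)) := by
  rw [Finset.disjoint_left]
  intro d had hd
  simp only [mem_sdiff, mem_insert, mem_neighborFinset, not_or] at had hd
  exact hd.2.2
    (hG.isClique_commonNeighbors_s14 haw hnaw ⟨hax, hwx⟩ ⟨had, hd.1⟩ (Ne.symm hd.2.1))

theorem isClique_commonNeighbors_sdiff (hG : IsC4Free G) {d : ℕ}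
    (hreg : G.IsRegularOfDegree d) (hcard : Fintype.card V ≤ 2 * d + 1) {u w x : V}
    (hwx : G.Adj w x) (huniq : ∀ y, G.Adj u y → G.Adj w y → y = x) :
    G.IsClique (G.commonNeighbors u x \ {w}) := by
  rintro a ⟨ha, haw⟩ b ⟨hb, hbw⟩ hab
  by_contra hnab
  rw [Set.mem_singleton_iff] at haw hbw
  have hnwa : ¬G.Adj w a := fun h => ha.2.ne' (huniq a ha.1 h)
  have hnwb : ¬G.Adj w b := fun h => hb.2.ne' (huniq b hb.1 h)
  have hWf : #(G.neighborFinset w) ≤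
      #(G.neighborFinset w \ insert x (G.neighborFinset x)) +
        #(G.neighborFinset w ∩ G.neighborFinset x) + 1 := by
    rw [← card_sdiff_add_card_inter _ (insert x (G.neighborFinset x)),
      inter_insert_of_mem (by simpa using hwx)]
    have := card_insert_le x (G.neighborFinset w ∩ G.neighborFinset x)
    omega
  set Wf := G.neighborFinset w \ insert x (G.neighborFinset x)
  have hdisj : Disjoint (G.neighborFinset a ∪ G.neighborFinset b)
      (insert a (insert b (insert w Wf))) := by
    rw [Finset.disjoint_union_left]
    simp only [Finset.disjoint_insert_right, mem_neighborFinset]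
    exact ⟨⟨G.irrefl, hnab, fun h => hnwa h.symm,
        hG.disjoint_neighborFinset_sdiff haw (fun h => hnwa h.symm) ha.2.symm hwx⟩,
      ⟨fun h => hnab h.symm, G.irrefl, fun h => hnwb h.symm,
        hG.disjoint_neighborFinset_sdiff hbw (fun h => hnwb h.symm) hb.2.symm hwx⟩⟩
  have htotal := card_le_univ
    (G.neighborFinset a ∪ G.neighborFinset b ∪ insert a (insert b (insert w Wf)))
  rw [card_union_of_disjoint hdisj, card_insert_of_notMem (by simp [hab, haw, hnwa, Wf]),
    card_insert_of_notMem (by simp [hbw, hnwb, Wf]), card_insert_of_notMem (by simp [Wf])] at htotal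
  have hinter := hG.card_inter_neighborFinset_le ha hb hab hnab
  have hunion := card_union_add_card_inter (G.neighborFinset a) (G.neighborFinset b)
  have hUW := card_inter_neighborFinset_add_card_inter_neighborFinset_le_degree huniq
  simp only [card_neighborFinset_eq_degree, hreg _] at hWf hUW hunion
  omega

end IsC4Free

theorem stmt14_general {V : Type*} [Fintype V] (G : SimpleGraph V)
    (k : ℕ) (hcard : Fintype.card V = 4 * k + 1)
    [DecidableRel G.Adj] (hreg : G.IsRegularOfDegree (2 * k)) (hC4 : IsC4Free G)
    (u w : V)
    (x : V) (hux : G.Adj u x) (hwx : G.Adj w x)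
    (huniq : ∀ y : V, G.Adj u y → G.Adj w y → y = x) :
    G.IsClique ((G.neighborSet u ∩ G.neighborSet x) \ {w}) ∧
      G.IsClique ((G.neighborSet w ∩ G.neighborSet x) \ {u}) := by
  have hcard' : Fintype.card V ≤ 2 * (2 * k) + 1 := by omega
  exact ⟨hC4.isClique_commonNeighbors_sdiff hreg hcard' hwx huniq,
    hC4.isClique_commonNeighbors_sdiff hreg hcard' hux fun y hw hu => huniq y hu hw⟩

theorem stmt14 {V : Type*} [Fintype V] (G : SimpleGraph V)
    (k : ℕ) (hcard : Fintype.card V = 4 * k + 1)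
    [DecidableRel G.Adj] (hreg : G.IsRegularOfDegree (2 * k)) (hC4 : IsC4Free G)
    (u w : V) (huw : u ≠ w) (hnadj : ¬G.Adj u w)
    (hdom : ∀ v : V, v ≠ u → v ≠ w → G.Adj u v ∨ G.Adj w v)
    (x : V) (hux : G.Adj u x) (hwx : G.Adj w x)
    (huniq : ∀ y : V, G.Adj u y → G.Adj w y → y = x) :
    G.IsClique ((G.neighborSet u ∩ G.neighborSet x) \ {w}) ∧
      G.IsClique ((G.neighborSet w ∩ G.neighborSet x) \ {u}) :=
  stmt14_general G k hcard hreg hC4 u w x hux hwx huniq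
end

section
/- Let G be a 2k-regular C4-free graph on 4k+1 vertices containing a non-adjacent dominating pair of vertices. Then G contains a clique of size at least k+1. -/
open SimpleGraph
open scoped Classical

/-!
Since `N(u) ∪ N(w)` covers the `4k - 1` vertices other than `u, w` and both have size `2k`,
`u` and `w` have exactly one common neighbour `x`. Let `A` (resp. `B`) be the neighbours of `u`
(resp. `w`) that are neither `x` nor adjacent to `x`; counting `N(x)` gives `|A| + |B| = 2k`, so
by symmetry `|A| ≥ k ≥ |B|`. If `A` is a clique, `A ∪ {u}` is the required clique. Otherwise
take non-adjacent `a, a' ∈ A`. By C4-freeness their neighbours in `N(w)` lie in `B` and are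
disjoint, so together they number at most `k`; as every neighbour of `a` other than `u` lies in
`N(u) ∪ N(w)`, the vertices `a, a'` have at least `k` common neighbours in `N(u)`. In a C4-free
graph the common neighbours of two non-adjacent vertices form a clique, and adding `a` gives one
of size `k + 1`.
-/

open Finset

section

variable {V : Type*} {G : SimpleGraph V}

theorem IsC4Free.isClique_commonNeighbors_s15 (hC4 : IsC4Free G) {a c : V} (hac : a ≠ c)
    (hnadj : ¬G.Adj a c) : G.IsClique (G.commonNeighbors a c) := by
  intro y hy z hz hyz
  rw [mem_commonNeighbors] at hy hz
  by_contra hnyz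
  exact hC4 a y c z hac hyz hy.1 hy.2.symm hz.2 hz.1.symm hnadj hnyz

theorem IsC4Free.exists_isClique_card_eq [Fintype V] [DecidableRel G.Adj] (hC4 : IsC4Free G)
    {a c : V} (hac : a ≠ c) (hnadj : ¬G.Adj a c) :
    ∃ s : Finset V, G.IsClique ↑s ∧
      #s = #(G.neighborFinset a ∩ G.neighborFinset c) + 1 := by
  refine ⟨insert a (G.neighborFinset a ∩ G.neighborFinset c), ?_, ?_⟩
  · rw [coe_insert, coe_inter, coe_neighborFinset, coe_neighborFinset]
    exact (hC4.isClique_commonNeighbors_s15 hac hnadj).insert fun b hb _ => hb.1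
  · exact card_insert_of_notMem fun ha =>
      G.irrefl ((mem_neighborFinset _ _ _).1 (mem_inter.1 ha).1)

theorem SimpleGraph.adj_of_neighborFinset_inter_eq_singleton [Fintype V] [DecidableRel G.Adj]
    {u w x : V} (hx : G.neighborFinset u ∩ G.neighborFinset w = {x}) :
    G.Adj u x ∧ G.Adj w x := by
  have hx' : x ∈ G.neighborFinset u ∩ G.neighborFinset w := hx ▸ mem_singleton_self x
  simpa using hx'

theorem SimpleGraph.eq_of_neighborFinset_inter_eq_singleton [Fintype V] [DecidableRel G.Adj]
    {u w x b : V} (hx : G.neighborFinset u ∩ G.neighborFinset w = {x})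
    (hub : G.Adj u b) (hwb : G.Adj w b) : b = x := by
  have hb : b ∈ G.neighborFinset u ∩ G.neighborFinset w := by simp [hub, hwb]
  rwa [hx, mem_singleton] at hb

structure SimpleGraph.IsDominatingPair (G : SimpleGraph V) (u w : V) : Prop where
  ne : u ≠ w
  not_adj : ¬G.Adj u w
  adj_or_adj : ∀ v : V, v ≠ u → v ≠ w → G.Adj u v ∨ G.Adj w v

namespace SimpleGraph.IsDominatingPair

variable {u w : V}

theorem symm (h : G.IsDominatingPair u w) : G.IsDominatingPair w u :=
  ⟨h.ne.symm, fun hwu => h.not_adj hwu.symm, fun v hvw hvu => (h.adj_or_adj v hvu hvw).symm⟩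

variable [Fintype V] [DecidableRel G.Adj]

theorem card_inter_add_card (h : G.IsDominatingPair u w) :
    #(G.neighborFinset u ∩ G.neighborFinset w) + Fintype.card V =
      G.degree u + G.degree w + 2 := by
  have hunion : G.neighborFinset u ∪ G.neighborFinset w = univ \ {u, w} := by
    ext v
    simp only [mem_union, mem_sdiff, mem_univ, true_and, mem_insert, mem_singleton,
      mem_neighborFinset, not_or]
    constructor
    · rintro (hv | hv)
      · exact ⟨hv.ne', by rintro rfl; exact h.not_adj hv⟩
      · exact ⟨by rintro rfl; exact h.not_adj hv.symm, hv.ne'⟩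
    · exact fun ⟨hvu, hvw⟩ => h.adj_or_adj v hvu hvw
  have hcompl := card_sdiff_add_card_eq_card (subset_univ ({u, w} : Finset V))
  rw [card_pair h.ne, card_univ] at hcompl
  have := card_union_add_card_inter (G.neighborFinset u) (G.neighborFinset w)
  rw [hunion, card_neighborFinset_eq_degree, card_neighborFinset_eq_degree] at this
  omega

theorem degree_le (h : G.IsDominatingPair u w) {c : V} (hcw : ¬G.Adj c w) :
    G.degree c ≤ #(G.neighborFinset c ∩ G.neighborFinset u) +
      #(G.neighborFinset c ∩ G.neighborFinset w) + 1 := by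
  have hsub : G.neighborFinset c ⊆
      insert u (G.neighborFinset c ∩ G.neighborFinset u ∪
        G.neighborFinset c ∩ G.neighborFinset w) := by
    intro z hz
    rw [mem_neighborFinset] at hz
    rcases eq_or_ne z u with rfl | hzu
    · exact mem_insert_self _ _
    have hzw : z ≠ w := by rintro rfl; exact hcw hz
    rcases h.adj_or_adj z hzu hzw with h' | h' <;> simp [hz, h']
  have hle := (card_le_card hsub).trans (card_insert_le _ _)
  have hunion := card_union_le (G.neighborFinset c ∩ G.neighborFinset u)
    (G.neighborFinset c ∩ G.neighborFinset w)
  rw [card_neighborFinset_eq_degree] at hle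
  omega

theorem degree_eq (h : G.IsDominatingPair u w) {x : V}
    (hx : G.neighborFinset u ∩ G.neighborFinset w = {x}) :
    G.degree x = #(G.neighborFinset x ∩ G.neighborFinset u) +
      #(G.neighborFinset x ∩ G.neighborFinset w) + 2 := by
  obtain ⟨hux, hwx⟩ := adj_of_neighborFinset_inter_eq_singleton hx
  have hN : G.neighborFinset x =
      insert u (insert w (G.neighborFinset x ∩ G.neighborFinset u ∪
        G.neighborFinset x ∩ G.neighborFinset w)) := by
    ext z
    simp only [mem_insert, mem_union, mem_inter, mem_neighborFinset]
    constructor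
    · intro hz
      rcases eq_or_ne z u with rfl | hzu
      · exact Or.inl rfl
      rcases eq_or_ne z w with rfl | hzw
      · exact Or.inr (Or.inl rfl)
      rcases h.adj_or_adj z hzu hzw with h' | h' <;> simp [hz, h']
    · rintro (rfl | rfl | ⟨hz, -⟩ | ⟨hz, -⟩)
      exacts [hux.symm, hwx.symm, hz, hz]
  have hdisj : Disjoint (G.neighborFinset x ∩ G.neighborFinset u)
      (G.neighborFinset x ∩ G.neighborFinset w) := by
    refine Finset.disjoint_left.2 fun z hzu hzw => ?_
    simp only [mem_inter, mem_neighborFinset] at hzu hzw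
    obtain rfl := eq_of_neighborFinset_inter_eq_singleton hx hzu.2 hzw.2
    exact G.irrefl hzu.1
  rw [← card_neighborFinset_eq_degree]
  conv_lhs => rw [hN]
  rw [card_insert_of_notMem, card_insert_of_notMem, card_union_of_disjoint hdisj]
  · simp [h.not_adj]
  · simp [h.ne, h.symm.not_adj]

end SimpleGraph.IsDominatingPair

namespace SimpleGraph

variable [Fintype V] [DecidableRel G.Adj]

noncomputable def privateNeighborFinset (G : SimpleGraph V) [DecidableRel G.Adj] (u x : V) :
    Finset V :=
  G.neighborFinset u \ insert x (G.neighborFinset x)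

theorem mem_privateNeighborFinset {u x a : V} :
    a ∈ G.privateNeighborFinset u x ↔ G.Adj u a ∧ a ≠ x ∧ ¬G.Adj x a := by
  simp [privateNeighborFinset]

theorem card_privateNeighborFinset {u x : V} (hux : G.Adj u x) :
    #(G.privateNeighborFinset u x) + #(G.neighborFinset x ∩ G.neighborFinset u) + 1 =
      G.degree u := by
  have := card_sdiff_add_card_inter (G.neighborFinset u) (insert x (G.neighborFinset x))
  rw [inter_insert_of_mem ((mem_neighborFinset _ _ _).2 hux),
    card_insert_of_notMem (by simp), inter_comm, card_neighborFinset_eq_degree] at this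
  rw [privateNeighborFinset]
  omega

theorem card_inter_neighborFinset_add_two_le {u a a' : V} (hua : G.Adj u a) (hua' : G.Adj u a')
    (hne : a ≠ a') (hnadj : ¬G.Adj a a') :
    #((G.neighborFinset a ∪ G.neighborFinset a') ∩ G.neighborFinset u) + 2 ≤ G.degree u := by
  have hsub : insert a (insert a'
      ((G.neighborFinset a ∪ G.neighborFinset a') ∩ G.neighborFinset u)) ⊆
        G.neighborFinset u := by
    intro z hz
    simp only [mem_insert, mem_inter] at hz
    rcases hz with rfl | rfl | ⟨-, hz⟩
    exacts [(mem_neighborFinset _ _ _).2 hua, (mem_neighborFinset _ _ _).2 hua', hz]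
  have := card_le_card hsub
  rw [card_insert_of_notMem (by simp [hne, G.adj_comm a' a, hnadj]),
    card_insert_of_notMem (by simp [hnadj]), card_neighborFinset_eq_degree] at this
  omega

variable {u w x : V}

theorem IsDominatingPair.mem_privateNeighborFinset_of_adj (h : G.IsDominatingPair u w)
    (hC4 : IsC4Free G) (hx : G.neighborFinset u ∩ G.neighborFinset w = {x}) {a b : V}
    (ha : a ∈ G.privateNeighborFinset u x) (hab : G.Adj a b) (hwb : G.Adj w b) :
    b ∈ G.privateNeighborFinset w x := by
  obtain ⟨hua, hax, hnxa⟩ := mem_privateNeighborFinset.1 ha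
  have hux := (adj_of_neighborFinset_inter_eq_singleton hx).1
  have hbx : b ≠ x := by rintro rfl; exact hnxa hab.symm
  refine mem_privateNeighborFinset.2 ⟨hwb, hbx, fun hxb => hbx ?_⟩
  have hub : G.Adj u b := hC4.isClique_commonNeighbors_s15 hax (fun h' => hnxa h'.symm)
    ⟨hua.symm, hux.symm⟩ ⟨hab, hxb⟩ (by rintro rfl; exact h.symm.not_adj hwb)
  exact eq_of_neighborFinset_inter_eq_singleton hx hub hwb

theorem IsDominatingPair.card_inter_add_card_inter_le (h : G.IsDominatingPair u w)
    (hC4 : IsC4Free G) (hx : G.neighborFinset u ∩ G.neighborFinset w = {x}) {a a' : V}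
    (ha : a ∈ G.privateNeighborFinset u x) (ha' : a' ∈ G.privateNeighborFinset u x)
    (hne : a ≠ a') (hnadj : ¬G.Adj a a') :
    #(G.neighborFinset a ∩ G.neighborFinset w) + #(G.neighborFinset a' ∩ G.neighborFinset w) ≤
      #(G.privateNeighborFinset w x) := by
  have hdisj : Disjoint (G.neighborFinset a ∩ G.neighborFinset w)
      (G.neighborFinset a' ∩ G.neighborFinset w) := by
    refine Finset.disjoint_left.2 fun b hb hb' => ?_
    simp only [mem_inter, mem_neighborFinset] at hb hb'
    have hub : G.Adj u b := hC4.isClique_commonNeighbors_s15 hne hnadj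
      ⟨(mem_privateNeighborFinset.1 ha).1.symm, (mem_privateNeighborFinset.1 ha').1.symm⟩
      ⟨hb.1, hb'.1⟩ (by rintro rfl; exact h.not_adj hb.2.symm)
    obtain rfl := eq_of_neighborFinset_inter_eq_singleton hx hub hb.2
    exact (mem_privateNeighborFinset.1 ha).2.2 hb.1.symm
  rw [← card_union_of_disjoint hdisj]
  refine card_le_card (union_subset ?_ ?_) <;> intro b hb <;>
    simp only [mem_inter, mem_neighborFinset] at hb
  exacts [h.mem_privateNeighborFinset_of_adj hC4 hx ha hb.1 hb.2,
    h.mem_privateNeighborFinset_of_adj hC4 hx ha' hb.1 hb.2]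

theorem IsDominatingPair.exists_isClique_of_card_privateNeighborFinset
    (h : G.IsDominatingPair u w) (hC4 : IsC4Free G) {k : ℕ} (hreg : G.IsRegularOfDegree (2 * k))
    (hx : G.neighborFinset u ∩ G.neighborFinset w = {x})
    (hA : k ≤ #(G.privateNeighborFinset u x)) (hB : #(G.privateNeighborFinset w x) ≤ k) :
    ∃ s : Finset V, G.IsClique ↑s ∧ k + 1 ≤ #s := by
  by_cases hcl : G.IsClique (G.privateNeighborFinset u x : Set V)
  · refine ⟨insert u (G.privateNeighborFinset u x), ?_, ?_⟩
    · rw [coe_insert]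
      exact hcl.insert fun b hb _ => (mem_privateNeighborFinset.1 hb).1
    · rw [card_insert_of_notMem fun hu => G.irrefl (mem_privateNeighborFinset.1 hu).1]
      omega
  obtain ⟨a, ha, a', ha', hne, hnadj⟩ : ∃ a ∈ G.privateNeighborFinset u x,
      ∃ a' ∈ G.privateNeighborFinset u x, a ≠ a' ∧ ¬G.Adj a a' := by
    simpa [IsClique, Set.Pairwise] using hcl
  have hnw : ∀ c ∈ G.privateNeighborFinset u x, ¬G.Adj c w := fun c hc hcw =>
    (mem_privateNeighborFinset.1 hc).2.1
      (eq_of_neighborFinset_inter_eq_singleton hx (mem_privateNeighborFinset.1 hc).1 hcw.symm)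
  have hda := h.degree_le (hnw a ha)
  have hda' := h.degree_le (hnw a' ha')
  have hF := h.card_inter_add_card_inter_le hC4 hx ha ha' hne hnadj
  have hU := card_inter_neighborFinset_add_two_le (mem_privateNeighborFinset.1 ha).1
    (mem_privateNeighborFinset.1 ha').1 hne hnadj
  have hUI := card_union_add_card_inter (G.neighborFinset a ∩ G.neighborFinset u)
    (G.neighborFinset a' ∩ G.neighborFinset u)
  rw [← union_inter_distrib_right, ← inter_inter_distrib_right] at hUI
  have hI := card_le_card (inter_subset_left (s₁ := G.neighborFinset a ∩ G.neighborFinset a')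
    (s₂ := G.neighborFinset u))
  rw [hreg] at hda hda' hU
  obtain ⟨s, hs, hcard⟩ := hC4.exists_isClique_card_eq hne hnadj
  exact ⟨s, hs, by omega⟩

end SimpleGraph

end

theorem stmt15 {V : Type*} [Fintype V] (G : SimpleGraph V)
    (k : ℕ) (hcard : Fintype.card V = 4 * k + 1)
    [DecidableRel G.Adj] (hreg : G.IsRegularOfDegree (2 * k)) (hC4 : IsC4Free G)
    (u w : V) (huw : u ≠ w) (hnadj : ¬G.Adj u w)
    (hdom : ∀ v : V, v ≠ u → v ≠ w → G.Adj u v ∨ G.Adj w v) :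
    ∃ s : Finset V, G.IsClique ↑s ∧ k + 1 ≤ s.card := by
  have h : G.IsDominatingPair u w := ⟨huw, hnadj, hdom⟩
  obtain ⟨x, hx⟩ : ∃ x, G.neighborFinset u ∩ G.neighborFinset w = {x} := by
    have := h.card_inter_add_card
    rw [hreg u, hreg w, hcard] at this
    exact card_eq_one.1 (by omega)
  obtain ⟨hux, hwx⟩ := adj_of_neighborFinset_inter_eq_singleton hx
  have hA := card_privateNeighborFinset hux
  have hB := card_privateNeighborFinset hwx
  have hX := h.degree_eq hx
  rw [hreg] at hA hB hX
  rcases le_total k #(G.privateNeighborFinset u x) with hk | hk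
  · exact h.exists_isClique_of_card_privateNeighborFinset hC4 hreg hx hk (by omega)
  · exact h.symm.exists_isClique_of_card_privateNeighborFinset hC4 hreg
      (by rwa [inter_comm]) (by omega) (by omega)
end

section
/- If G is a C4-free graph on n vertices with independence number at least 3 and minimum degree δ, then there exist two non-adjacent vertices whose common neighborhood induces a clique of size greater than δ − n/3. -/
open SimpleGraph
open scoped Classical

/-!
Take an independent triple `a, b, c`. Their neighbourhoods avoid `{a, b, c}`, so their union has
at most `n - 3` vertices, while by inclusion–exclusion it has at least
`3δ - (|N(a) ∩ N(b)| + |N(a) ∩ N(c)| + |N(b) ∩ N(c)|)` vertices. Hence one of the three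
common neighbourhoods has at least `δ - n/3 + 1` vertices, and in a C4-free graph the common
neighbourhood of two non-adjacent vertices is a clique.
-/

open Finset

namespace SimpleGraph

variable {V : Type*} {G : SimpleGraph V}

theorem IsC4Free.isClique_commonNeighbors_s17 (hG : IsC4Free G) {u v : V} (huv : u ≠ v)
    (hna : ¬G.Adj u v) : G.IsClique (G.commonNeighbors u v) := by
  rintro x ⟨hux, hvx⟩ y ⟨huy, hvy⟩ hxy
  by_contra hxy'
  exact hG u x v y huv hxy hux hvx.symm hvy huy.symm hna hxy'

theorem exists_indep_triple_of_three_le_indepNum (h : 3 ≤ _root_.indepNum G) :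
    ∃ a b c : V, a ≠ b ∧ a ≠ c ∧ b ≠ c ∧ ¬G.Adj a b ∧ ¬G.Adj a c ∧ ¬G.Adj b c := by
  obtain ⟨s, hs⟩ := Gᶜ.exists_isNClique_cliqueNum
  obtain ⟨t, hts, ht⟩ := exists_subset_card_eq (h.trans hs.card_eq.ge)
  obtain ⟨a, b, c, hab, hac, hbc, -⟩ :=
    is3Clique_iff.mp ⟨hs.isClique.subset hts, ht⟩
  rw [compl_adj] at hab hac hbc
  exact ⟨a, b, c, hab.1, hac.1, hbc.1, hab.2, hac.2, hbc.2⟩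

variable [Fintype V] [DecidableRel G.Adj]

theorem ncard_commonNeighbors (u v : V) :
    (G.commonNeighbors u v).ncard = #(G.neighborFinset u ∩ G.neighborFinset v) := by
  rw [← Set.ncard_coe_finset, coe_inter, coe_neighborFinset, coe_neighborFinset]
  rfl

theorem card_neighborFinset_union_add_three_le {a b c : V} (hab : a ≠ b) (hac : a ≠ c)
    (hbc : b ≠ c) (hab' : ¬G.Adj a b) (hac' : ¬G.Adj a c) (hbc' : ¬G.Adj b c) :
    #(G.neighborFinset a ∪ G.neighborFinset b ∪ G.neighborFinset c) + 3 ≤ Fintype.card V := by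
  have hdisj : Disjoint (G.neighborFinset a ∪ G.neighborFinset b ∪ G.neighborFinset c)
      {a, b, c} := by
    simp only [disjoint_right, mem_insert, mem_singleton, mem_union, mem_neighborFinset]
    rintro x (rfl | rfl | rfl) <;> simp_all [adj_comm]
  have hcard := (card_union_of_disjoint hdisj).symm.trans_le (card_le_univ _)
  rwa [card_eq_three.mpr ⟨a, b, c, hab, hac, hbc, rfl⟩] at hcard

theorem three_mul_minDegree_add_three_le {a b c : V} (hab : a ≠ b) (hac : a ≠ c)
    (hbc : b ≠ c) (hab' : ¬G.Adj a b) (hac' : ¬G.Adj a c) (hbc' : ¬G.Adj b c) :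
    3 * G.minDegree + 3 ≤ Fintype.card V + ((G.commonNeighbors a b).ncard +
      (G.commonNeighbors a c).ncard + (G.commonNeighbors b c).ncard) := by
  have hincl := card_add_card_add_card_le (G.neighborFinset a) (G.neighborFinset b)
    (G.neighborFinset c)
  have hunion := card_neighborFinset_union_add_three_le hab hac hbc hab' hac' hbc'
  have ha : G.minDegree ≤ #(G.neighborFinset a) := G.minDegree_le_degree a
  have hb : G.minDegree ≤ #(G.neighborFinset b) := G.minDegree_le_degree b
  have hc : G.minDegree ≤ #(G.neighborFinset c) := G.minDegree_le_degree c
  simp only [ncard_commonNeighbors]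
  omega

end SimpleGraph

theorem stmt17 {V : Type*} [Fintype V] (G : SimpleGraph V) [DecidableRel G.Adj]
    (hC4 : IsC4Free G) (hα : 3 ≤ _root_.indepNum G) :
    ∃ u v : V, u ≠ v ∧ ¬G.Adj u v ∧ G.IsClique (G.commonNeighbors u v) ∧
      ((G.commonNeighbors u v).ncard : ℝ) >
        (G.minDegree : ℝ) - (Fintype.card V : ℝ) / 3 := by
  by_contra! hsmall
  obtain ⟨a, b, c, hab, hac, hbc, hab', hac', hbc'⟩ :=
    exists_indep_triple_of_three_le_indepNum hα
  have hsum : (3 * G.minDegree + 3 : ℝ) ≤ Fintype.card V + ((G.commonNeighbors a b).ncard +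
      (G.commonNeighbors a c).ncard + (G.commonNeighbors b c).ncard) := by
    exact_mod_cast three_mul_minDegree_add_three_le hab hac hbc hab' hac' hbc'
  have hsmall_pair {u v : V} (huv : u ≠ v) (hna : ¬G.Adj u v) :=
    hsmall u v huv hna (hC4.isClique_commonNeighbors_s17 huv hna)
  linarith [hsmall_pair hab hab', hsmall_pair hac hac', hsmall_pair hbc hbc']
end
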